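/- arXiv:math/0207081 — 5 statements merged into one kernel-verified Lean document; each statement's English description precedes it below -/
import Mathlib

section
/- Non-Archimedean maximum modulus principle: let k be an algebraically closed field complete with respect to a nontrivial non-Archimedean absolute value, let r ∈ |k*|, and let f = Σ_{n≥0} aₙ zⁿ satisfy |aₙ| rⁿ → 0. Then sup_n |aₙ| rⁿ = sup { |f(z)| : z ∈ k, |z| = r }, and this supremum is attained at some z with |z| = r. -/
/-!
Rescaling by `c` reduces to `r = 1`. Let `N` be the last index at which `‖aₙ‖` attains
its maximum `M`. On the unit sphere the tail `∑_{n > N} aₙ wⁿ` has norm `< M`, so it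
suffices to find `‖w‖ = 1` with `‖∑_{n ≤ N} aₙ wⁿ‖ = M`. Pick `d` with
`‖d‖ = ‖a₀ - d‖ = M`; this needs a unit `u` with `‖1 - u‖ = 1`, namely `-1` or a
primitive cube root of unity. The roots of `∑_{n ≤ N} aₙ Xⁿ - d` have norm `≤ 1` and
their norms multiply to `‖a₀ - d‖ / ‖a_N‖ = 1`, so each root `w` has norm `1`, and there
the polynomial part takes the value `d`, of norm `M`.
-/

open Filter Topology Polynomial

section NormedAddCommGroup

variable {E : Type*} [NormedAddCommGroup E]

lemma exists_forall_norm_le_of_tendsto_zero {f : ℕ → E} (hf : Tendsto f atTop (𝓝 0)) :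
    ∃ N, ∀ n, ‖f n‖ ≤ ‖f N‖ := by
  by_cases! h : ∀ n, f n = 0
  · exact ⟨0, fun n => by simp [h]⟩
  obtain ⟨m, hm⟩ := h
  obtain ⟨K, hK⟩ := eventually_atTop.1 <|
    (tendsto_zero_iff_norm_tendsto_zero.1 hf).eventually (gt_mem_nhds (norm_pos_iff.2 hm))
  obtain ⟨N, -, hN⟩ := (Finset.range (K + m + 1)).exists_max_image (‖f ·‖)
    ⟨m, Finset.mem_range.2 (by omega)⟩
  refine ⟨N, fun n => ?_⟩
  by_cases hn : n < K + m + 1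
  · exact hN n (Finset.mem_range.2 hn)
  · exact (hK n (by omega)).le.trans (hN m (Finset.mem_range.2 (by omega)))

lemma exists_last_argmax_norm_of_tendsto_zero {f : ℕ → E} (hf : Tendsto f atTop (𝓝 0))
    (hf0 : f ≠ 0) :
    ∃ N, f N ≠ 0 ∧ (∀ n, ‖f n‖ ≤ ‖f N‖) ∧ ∀ n, N < n → ‖f n‖ < ‖f N‖ := by
  obtain ⟨N₀, hN₀⟩ := exists_forall_norm_le_of_tendsto_zero hf
  set M := ‖f N₀‖
  have hM : 0 < M := by
    obtain ⟨m, hm⟩ := Function.ne_iff.1 hf0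
    exact (norm_pos_iff.2 hm).trans_le (hN₀ m)
  obtain ⟨K, hK⟩ := eventually_atTop.1 <|
    (tendsto_zero_iff_norm_tendsto_zero.1 hf).eventually (gt_mem_nhds hM)
  have hN₀K : N₀ ≤ K := by
    by_contra! h
    exact (hK N₀ h.le).false
  classical
  set N := Nat.findGreatest (fun n => ‖f n‖ = M) K
  have hN : ‖f N‖ = M := Nat.findGreatest_spec (P := fun n => ‖f n‖ = M) hN₀K rfl
  refine ⟨N, norm_pos_iff.1 (hN ▸ hM), hN ▸ hN₀,
    fun n hn => hN ▸ (hN₀ n).lt_of_ne fun h => ?_⟩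
  rcases le_or_gt n K with hnK | hnK
  · exact Nat.findGreatest_is_greatest hn hnK h
  · exact (hK n hnK.le).ne h

variable [IsUltrametricDist E]

lemma IsUltrametricDist.norm_add_eq_left {x y : E} (h : ‖y‖ < ‖x‖) : ‖x + y‖ = ‖x‖ := by
  rw [norm_add_eq_max_of_norm_ne_norm h.ne', max_eq_left h.le]

lemma IsUltrametricDist.norm_sum_lt_of_forall_lt {ι : Type*} {s : Finset ι} {f : ι → E}
    {C : ℝ} (hC : 0 < C) (h : ∀ i ∈ s, ‖f i‖ < C) : ‖∑ i ∈ s, f i‖ < C := by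
  rcases s.eq_empty_or_nonempty with rfl | hs
  · simpa using hC
  · exact (hs.norm_sum_le_sup'_norm f).trans_lt ((Finset.sup'_lt_iff hs).2 h)

lemma IsUltrametricDist.norm_tsum_lt_of_forall_lt {f : ℕ → E} (hf : Tendsto f atTop (𝓝 0))
    {C : ℝ} (h : ∀ n, ‖f n‖ < C) : ‖∑' n, f n‖ < C := by
  obtain ⟨N, hN⟩ := exists_forall_norm_le_of_tendsto_zero hf
  exact (norm_tsum_le_of_forall_le hN).trans_lt (h N)

end NormedAddCommGroup

section NormedField

variable {k : Type*} [NormedField k] [IsUltrametricDist k]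

lemma exists_norm_eq_one_norm_one_sub_eq_one [IsAlgClosed k] :
    ∃ u : k, ‖u‖ = 1 ∧ ‖1 - u‖ = 1 := by
  by_cases h2 : ‖(2 : k)‖ = 1
  · exact ⟨-1, by simp, by rw [sub_neg_eq_add, one_add_one_eq_two, h2]⟩
  have h3 : ‖(3 : k)‖ = 1 := by
    have h2le : ‖(2 : k)‖ ≤ 1 := by simpa using IsUltrametricDist.norm_natCast_le_one k 2
    have h2lt : ‖(2 : k)‖ < ‖(1 : k)‖ := norm_one (α := k) ▸ h2le.lt_of_ne h2
    rw [show (3 : k) = 1 + 2 by norm_num, IsUltrametricDist.norm_add_eq_left h2lt, norm_one]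
  obtain ⟨ω, hω⟩ := IsAlgClosed.exists_root (X ^ 2 + X + 1 : k[X])
    (by rw [show (X ^ 2 + X + 1 : k[X]).degree = 2 by compute_degree!]; decide)
  simp only [IsRoot.def, eval_add, eval_pow, eval_X, eval_one] at hω
  have hω1 : ‖ω‖ = 1 := by
    rw [← pow_eq_one_iff_of_nonneg (norm_nonneg ω) three_ne_zero, ← norm_pow,
      show ω ^ 3 = 1 by linear_combination (ω - 1) * hω, norm_one]
  refine ⟨ω, hω1, ?_⟩
  rw [← pow_eq_one_iff_of_nonneg (norm_nonneg _) two_ne_zero, ← norm_pow,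
    show (1 - ω) ^ 2 = -(3 * ω) by linear_combination hω, norm_neg, norm_mul, h3, hω1, one_mul]

lemma exists_norm_eq_norm_sub_eq [IsAlgClosed k] {x y : k} (h : ‖x‖ ≤ ‖y‖) :
    ∃ d : k, ‖d‖ = ‖y‖ ∧ ‖x - d‖ = ‖y‖ := by
  rcases h.lt_or_eq with hlt | heq
  · refine ⟨y, rfl, ?_⟩
    rw [sub_eq_add_neg, add_comm, IsUltrametricDist.norm_add_eq_left (by rwa [norm_neg]),
      norm_neg]
  · obtain ⟨u, hu, hu'⟩ := exists_norm_eq_one_norm_one_sub_eq_one (k := k)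
    exact ⟨x * u, by rw [norm_mul, hu, mul_one, heq], by
      rw [show x - x * u = x * (1 - u) by ring, norm_mul, hu', mul_one, heq]⟩

namespace Polynomial

variable {P : k[X]}

lemma norm_le_one_of_isRoot (hP : ∀ i, ‖P.coeff i‖ ≤ ‖P.leadingCoeff‖) (hP0 : P ≠ 0) {α : k}
    (hα : P.IsRoot α) : ‖α‖ ≤ 1 := by
  by_contra! hα1
  have hlead : 0 < ‖P.leadingCoeff‖ := norm_pos_iff.2 (leadingCoeff_ne_zero.2 hP0)
  have hlower : ‖∑ i ∈ Finset.range P.natDegree, P.coeff i * α ^ i‖ <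
      ‖P.leadingCoeff * α ^ P.natDegree‖ := by
    rw [norm_mul, norm_pow]
    refine IsUltrametricDist.norm_sum_lt_of_forall_lt (by positivity) fun i hi => ?_
    rw [norm_mul, norm_pow]
    exact mul_lt_mul_of_le_of_lt_of_nonneg_of_pos (hP i)
      (pow_lt_pow_right₀ hα1 (Finset.mem_range.1 hi)) (by positivity) hlead
  have heval : ‖P.eval α‖ = ‖P.leadingCoeff * α ^ P.natDegree‖ := by
    rw [eval_eq_sum_range, Finset.sum_range_succ, ← leadingCoeff, add_comm,
      IsUltrametricDist.norm_add_eq_left hlower]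
  rw [hα.eq_zero, norm_zero, norm_mul, norm_pow] at heval
  exact (mul_pos hlead (pow_pos (zero_lt_one.trans hα1) _)).ne heval

lemma exists_isRoot_norm_eq_one [IsAlgClosed k] (hP : ∀ i, ‖P.coeff i‖ ≤ ‖P.leadingCoeff‖)
    (hP0 : ‖P.coeff 0‖ = ‖P.leadingCoeff‖) (hdeg : 0 < P.natDegree) :
    ∃ α, P.IsRoot α ∧ ‖α‖ = 1 := by
  have hne : P ≠ 0 := ne_zero_of_natDegree_gt hdeg
  have hsplit := IsAlgClosed.splits P
  obtain ⟨α, hα⟩ := Multiset.card_pos_iff_exists_mem.1 (hsplit.natDegree_eq_card_roots ▸ hdeg)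
  obtain ⟨s, hroots⟩ := Multiset.exists_cons_of_mem hα
  have hroot : ∀ β ∈ P.roots, ‖β‖ ≤ 1 := fun β hβ =>
    norm_le_one_of_isRoot hP hne (isRoot_of_mem_roots hβ)
  have hprod : ‖α‖ * ‖s.prod‖ = 1 := by
    have := congrArg norm hsplit.coeff_zero_eq_leadingCoeff_mul_prod_roots
    rw [hP0, norm_mul, norm_mul, norm_pow, norm_neg, norm_one, one_pow, one_mul, hroots,
      Multiset.prod_cons, norm_mul] at this
    exact (mul_eq_left₀ (norm_ne_zero_iff.2 (leadingCoeff_ne_zero.2 hne))).1 this.symm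
  have hsprod : ‖s.prod‖ ≤ 1 := by
    refine Multiset.prod_induction (‖·‖ ≤ 1) s (fun a b ha hb => ?_) (by simp)
      fun β hβ => hroot β (hroots ▸ Multiset.mem_cons_of_mem hβ)
    rw [norm_mul]
    exact mul_le_one₀ ha (norm_nonneg b) hb
  refine ⟨α, isRoot_of_mem_roots hα, le_antisymm (hroot α hα) ?_⟩
  calc 1 = ‖α‖ * ‖s.prod‖ := hprod.symm
    _ ≤ ‖α‖ := mul_le_of_le_one_right (norm_nonneg α) hsprod

lemma exists_norm_eq_one_norm_eval_eq [IsAlgClosed k]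
    (hP : ∀ i, ‖P.coeff i‖ ≤ ‖P.leadingCoeff‖) :
    ∃ w : k, ‖w‖ = 1 ∧ ‖P.eval w‖ = ‖P.leadingCoeff‖ := by
  rcases Nat.eq_zero_or_pos P.natDegree with hdeg | hdeg
  · refine ⟨1, norm_one, ?_⟩
    rw [eq_C_of_natDegree_eq_zero hdeg, eval_C, leadingCoeff_C]
  obtain ⟨d, hd, hd0⟩ := exists_norm_eq_norm_sub_eq (hP 0)
  have hdeg' : (P - C d).natDegree = P.natDegree := natDegree_sub_C
  have hlead : (P - C d).leadingCoeff = P.leadingCoeff := by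
    rw [leadingCoeff, hdeg', coeff_sub, coeff_C, if_neg hdeg.ne', sub_zero, leadingCoeff]
  have hcoeff (i : ℕ) : ‖(P - C d).coeff i‖ ≤ ‖(P - C d).leadingCoeff‖ := by
    rw [hlead, coeff_sub, coeff_C]
    split_ifs with hi
    · rw [hi, hd0]
    · rw [sub_zero]; exact hP i
  obtain ⟨α, hα, hα1⟩ := exists_isRoot_norm_eq_one hcoeff
    (by rw [hlead, coeff_sub, coeff_C_zero, hd0]) (hdeg' ▸ hdeg)
  refine ⟨α, hα1, ?_⟩
  have hevalα : P.eval α = d := sub_eq_zero.1 (by simpa using hα.eq_zero)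
  rw [hevalα, hd]

end Polynomial

lemma exists_norm_eq_one_norm_sum_range_eq [IsAlgClosed k] {b : ℕ → k} {N : ℕ}
    (hbN : b N ≠ 0) (hb : ∀ i ≤ N, ‖b i‖ ≤ ‖b N‖) :
    ∃ w : k, ‖w‖ = 1 ∧ ‖∑ i ∈ Finset.range (N + 1), b i * w ^ i‖ = ‖b N‖ := by
  set P := PowerSeries.trunc (N + 1) (PowerSeries.mk b)
  have hcoeff (i : ℕ) : P.coeff i = if i < N + 1 then b i else 0 := by
    simp [P, PowerSeries.coeff_trunc]
  have hdeg : P.natDegree = N :=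
    le_antisymm (Nat.lt_succ_iff.1 (PowerSeries.natDegree_trunc_lt _ N))
      (le_natDegree_of_ne_zero (by rwa [hcoeff, if_pos N.lt_succ_self]))
  have hlead : P.leadingCoeff = b N := by
    rw [leadingCoeff, hdeg, hcoeff, if_pos N.lt_succ_self]
  obtain ⟨w, hw, hPw⟩ := exists_norm_eq_one_norm_eval_eq (P := P) fun i => by
    rw [hlead, hcoeff]
    split_ifs with hi
    · exact hb i (Nat.lt_succ_iff.1 hi)
    · simp
  refine ⟨w, hw, ?_⟩
  rw [← hlead, ← hPw, eval_eq_sum_range' (PowerSeries.natDegree_trunc_lt _ N)]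
  exact congrArg norm <| Finset.sum_congr rfl fun i hi => by
    rw [hcoeff, if_pos (Finset.mem_range.1 hi)]

theorem exists_norm_eq_one_norm_tsum_eq_iSup [CompleteSpace k] [IsAlgClosed k] {b : ℕ → k}
    (hb : Tendsto b atTop (𝓝 0)) :
    ∃ w : k, ‖w‖ = 1 ∧ ‖∑' n, b n * w ^ n‖ = ⨆ n, ‖b n‖ := by
  rcases eq_or_ne b 0 with rfl | hb0
  · exact ⟨1, norm_one, by simp⟩
  obtain ⟨N, hbN, hmax, hlt⟩ := exists_last_argmax_norm_of_tendsto_zero hb hb0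
  have hsup : ⨆ n, ‖b n‖ = ‖b N‖ :=
    le_antisymm (ciSup_le hmax) (le_ciSup ⟨_, Set.forall_mem_range.2 hmax⟩ N)
  obtain ⟨w, hw, hpoly⟩ := exists_norm_eq_one_norm_sum_range_eq hbN fun i _ => hmax i
  have hterm : Tendsto (fun n => b n * w ^ n) atTop (𝓝 0) :=
    squeeze_zero_norm (fun n => by simp [hw]) (tendsto_zero_iff_norm_tendsto_zero.1 hb)
  have hsum : Summable fun n => b n * w ^ n :=
    NonarchimedeanAddGroup.summable_of_tendsto_cofinite_zero (Nat.cofinite_eq_atTop ▸ hterm)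
  have htail : ‖∑' n, b (n + (N + 1)) * w ^ (n + (N + 1))‖ < ‖b N‖ :=
    IsUltrametricDist.norm_tsum_lt_of_forall_lt ((tendsto_add_atTop_iff_nat (N + 1)).2 hterm)
      fun n => by simpa [hw] using hlt _ (by omega)
  refine ⟨w, hw, ?_⟩
  rw [← hsum.sum_add_tsum_nat_add (N + 1), IsUltrametricDist.norm_add_eq_left (hpoly ▸ htail),
    hpoly, hsup]

end NormedField

theorem max_modulus_principle_general
    (k : Type*) [NontriviallyNormedField k] [IsAlgClosed k] [CompleteSpace k]
    [IsUltrametricDist k]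
    (a : ℕ → k) (c : k) (r : ℝ) (hr : r = ‖c‖)
    (hdecay : Tendsto (fun n => ‖a n‖ * r ^ n) atTop (nhds 0)) :
    (∀ z : k, ‖z‖ = r → ‖∑' n : ℕ, a n * z ^ n‖ ≤ ⨆ n : ℕ, ‖a n‖ * r ^ n) ∧
    (∃ z : k, ‖z‖ = r ∧ ‖∑' n : ℕ, a n * z ^ n‖ = ⨆ n : ℕ, ‖a n‖ * r ^ n) := by
  refine ⟨fun z hz => ?_, ?_⟩
  · simpa [hz] using IsUltrametricDist.norm_tsum_le fun n => a n * z ^ n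
  have hb : Tendsto (fun n => a n * c ^ n) atTop (𝓝 0) :=
    tendsto_zero_iff_norm_tendsto_zero.2 (by simpa [hr] using hdecay)
  obtain ⟨w, hw, hmax⟩ := exists_norm_eq_one_norm_tsum_eq_iSup hb
  refine ⟨c * w, by simp [hw, hr], ?_⟩
  simpa [mul_pow, mul_assoc, hr] using hmax

/-- Non-Archimedean maximum modulus principle: for `r = ‖c‖` in the value group and a
power series with `‖aₙ‖ rⁿ → 0`, the Gauss norm `sup_n ‖aₙ‖ rⁿ` equals the supremum of
`‖f(z)‖` over `‖z‖ = r`, and this supremum is attained. -/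
theorem max_modulus_principle
    (k : Type*) [NontriviallyNormedField k] [IsAlgClosed k] [CompleteSpace k]
    [IsUltrametricDist k]
    (a : ℕ → k) (c : k) (hc : c ≠ 0) (r : ℝ) (hr : r = ‖c‖)
    (hdecay : Tendsto (fun n => ‖a n‖ * r ^ n) atTop (nhds 0)) :
    (∀ z : k, ‖z‖ = r → ‖∑' n : ℕ, a n * z ^ n‖ ≤ ⨆ n : ℕ, ‖a n‖ * r ^ n) ∧
    (∃ z : k, ‖z‖ = r ∧ ‖∑' n : ℕ, a n * z ^ n‖ = ⨆ n : ℕ, ‖a n‖ * r ^ n) :=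
  max_modulus_principle_general k a c r hr hdecay
end

section
/- Let k be an algebraically closed field complete with respect to a nontrivial non-Archimedean absolute value, r ∈ |k*|, and f = Σ_{n≥0} aₙ zⁿ a nonzero power series with |aₙ| rⁿ → 0. If there exist integers n₁ ≠ n₂ with |a_{n₁}| t^{n₁} = |a_{n₂}| t^{n₂} = sup_n |aₙ| tⁿ for some t ∈ (0, r] ∩ |k*|, then f has a zero z₀ ∈ k with |z₀| = t. -/
/-!
Substituting `z ↦ d z` reduces to `t = 1`. The coefficient norms then attain their maximum `S`
at a first index `m` and a last index `N > m`, and so does every truncation `P_M` (`M > N`) of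
the series. The first and last dominant indices are additive under multiplication, so writing
`P_M = c ∏ (X - ρ)` over the algebraically closed field shows that `P_M` has exactly `N` roots in
the closed unit disc and `m` in the open one, hence a root on the unit circle; it also gives
`S ‖z - ρ‖ ^ N ≤ ‖P_M(z)‖` for the nearest root `ρ` in the disc. Since the tail of the series
tends to `0`, a root of `P_M` nearly annihilates `P_{M'}` for `M' ≥ M` and so lies close to a
root of `P_{M'}`. Following these roots along suitable truncations yields a Cauchy sequence on
the unit circle whose limit is a zero of the series.
-/

open Filter Polynomial IsUltrametricDist Topology

theorem norm_sub_eq_of_norm_lt {E : Type*} [SeminormedAddCommGroup E] [IsUltrametricDist E]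
    {x y : E} (h : ‖x‖ < ‖y‖) : ‖x - y‖ = ‖y‖ := by
  rw [sub_eq_add_neg, norm_add_eq_max_of_norm_ne_norm (by rw [norm_neg]; exact h.ne), norm_neg,
    max_eq_right h.le]

theorem eval_trunc_mk {A : Type*} [Semiring A] (b : ℕ → A) (M : ℕ) (z : A) :
    (PowerSeries.trunc M (PowerSeries.mk b)).eval z = ∑ n ∈ Finset.range M, b n * z ^ n := by
  simp [eval, PowerSeries.eval₂_trunc_eq_sum_range]

section Dominance

variable {k : Type*} [NormedField k] {R : ℕ → ℕ → Prop}

/-- For `R = (· < ·)`, `N` is the last index at which `‖a n‖` attains its maximum `S`;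
for `R = (· > ·)`, the first. -/
structure IsDominantIndex (R : ℕ → ℕ → Prop) (a : ℕ → k) (S : ℝ) (N : ℕ) : Prop where
  pos : 0 < S
  norm_eq : ‖a N‖ = S
  norm_le : ∀ n, ‖a n‖ ≤ S
  norm_lt : ∀ n, R N n → ‖a n‖ < S

theorem IsDominantIndex.unique (hR : R = (· < ·) ∨ R = (· > ·)) {a : ℕ → k} {S S' : ℝ}
    {N N' : ℕ} (h : IsDominantIndex R a S N) (h' : IsDominantIndex R a S' N') :
    S = S' ∧ N = N' := by
  have hS : S = S' := le_antisymm (h.norm_eq ▸ h'.norm_le N) (h'.norm_eq ▸ h.norm_le N')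
  refine ⟨hS, ?_⟩
  by_contra hN
  have : R N N' ∨ R N' N := by rcases hR with rfl | rfl <;> omega
  rcases this with hNN' | hN'N
  · exact (h.norm_lt N' hNN').ne (h'.norm_eq.trans hS.symm)
  · exact (h'.norm_lt N hN'N).ne (h.norm_eq.trans hS)

theorem IsDominantIndex.mul [IsUltrametricDist k] (hR : R = (· < ·) ∨ R = (· > ·))
    {P Q : k[X]} {S T : ℝ} {N M : ℕ}
    (hP : IsDominantIndex R P.coeff S N) (hQ : IsDominantIndex R Q.coeff T M) :
    IsDominantIndex R (P * Q).coeff (S * T) (N + M) := by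
  have hterm : ∀ i j, R N i ∨ R M j → ‖P.coeff i * Q.coeff j‖ < S * T := by
    rintro i j (hi | hj) <;> rw [norm_mul]
    · exact mul_lt_mul_of_lt_of_le_of_nonneg_of_pos (hP.norm_lt i hi) (hQ.norm_le j)
        (norm_nonneg _) hQ.pos
    · exact mul_lt_mul_of_le_of_lt_of_nonneg_of_pos (hP.norm_le i) (hQ.norm_lt j hj)
        (norm_nonneg _) hP.pos
  refine ⟨mul_pos hP.pos hQ.pos, ?_, fun n => ?_, fun n hn => ?_⟩ <;> rw [coeff_mul]
  · rw [IsNonarchimedean.apply_sum_eq_of_lt isNonarchimedean_norm (fun x => (norm_neg x).symm)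
      (k := (N, M)) (by simp), norm_mul, hP.norm_eq, hQ.norm_eq]
    rintro ⟨i, j⟩ hij hne
    rw [Finset.HasAntidiagonal.mem_antidiagonal] at hij
    dsimp only at hij ⊢
    rw [norm_mul (P.coeff N), hP.norm_eq, hQ.norm_eq]
    refine hterm i j ?_
    rw [ne_eq, Prod.mk.injEq] at hne
    rcases hR with rfl | rfl <;> omega
  · refine norm_sum_le_of_forall_le_of_nonneg (mul_pos hP.pos hQ.pos).le fun x _ => ?_
    rw [norm_mul]
    exact mul_le_mul (hP.norm_le _) (hQ.norm_le _) (norm_nonneg _) hP.pos.le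
  · obtain ⟨⟨i, j⟩, hij, hle⟩ :=
      exists_norm_finsetSum_le_of_nonempty (t := Finset.HasAntidiagonal.antidiagonal n)
        ⟨(n, 0), by simp⟩ fun x => P.coeff x.1 * Q.coeff x.2
    rw [Finset.HasAntidiagonal.mem_antidiagonal] at hij
    dsimp only at hij
    refine hle.trans_lt (hterm i j ?_)
    rcases hR with rfl | rfl <;> omega

theorem isDominantIndex_C (hR : R = (· < ·) ∨ R = (· > ·)) {c : k} (hc : c ≠ 0) :
    IsDominantIndex R (C c).coeff ‖c‖ 0 := by
  refine ⟨norm_pos_iff.mpr hc, by simp, fun n => ?_, fun n hn => ?_⟩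
  · rw [coeff_C]; split_ifs <;> simp
  · have : n ≠ 0 := by rcases hR with rfl | rfl <;> omega
    simpa [coeff_C, this] using hc

theorem isDominantIndex_X_sub_C_lt (ρ : k) :
    IsDominantIndex (· < ·) (X - C ρ).coeff (max 1 ‖ρ‖) (if ‖ρ‖ ≤ 1 then 1 else 0) := by
  refine ⟨by positivity, ?_, fun n => ?_, fun n hn => ?_⟩
  · split_ifs with h <;> simp [coeff_C, h, le_of_lt, not_le.mp]
  · rcases n with _ | _ | n <;> simp [coeff_X, coeff_C]
  · split_ifs at hn <;> rcases n with _ | _ | n <;> simp_all [coeff_X]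

theorem isDominantIndex_X_sub_C_gt (ρ : k) :
    IsDominantIndex (· > ·) (X - C ρ).coeff (max 1 ‖ρ‖) (if ‖ρ‖ < 1 then 1 else 0) := by
  refine ⟨by positivity, ?_, fun n => ?_, fun n hn => ?_⟩
  · split_ifs with h <;> simp [coeff_C, h, le_of_lt, not_lt.mp]
  · rcases n with _ | _ | n <;> simp [coeff_X, coeff_C]
  · split_ifs at hn with h
    · rcases n with _ | _ | n <;> simp_all [coeff_X]
    · omega

theorem isDominantIndex_prod_X_sub_C [IsUltrametricDist k] (hR : R = (· < ·) ∨ R = (· > ·))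
    (p : k → Prop) [DecidablePred p]
    (hlin : ∀ ρ, IsDominantIndex R (X - C ρ).coeff (max 1 ‖ρ‖) (if p ρ then 1 else 0))
    (s : Multiset k) :
    IsDominantIndex R (s.map (X - C ·)).prod.coeff (s.map (max 1 ‖·‖)).prod (s.filter p).card := by
  induction s using Multiset.induction_on with
  | empty => simpa using isDominantIndex_C hR (one_ne_zero (α := k))
  | cons ρ s ih =>
    have := (hlin ρ).mul hR ih
    rw [Multiset.filter_cons]
    split_ifs at this ⊢ <;> simpa [add_comm] using this

theorem IsDominantIndex.card_roots_filter [IsUltrametricDist k]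
    (hR : R = (· < ·) ∨ R = (· > ·)) (p : k → Prop) [DecidablePred p]
    (hlin : ∀ ρ, IsDominantIndex R (X - C ρ).coeff (max 1 ‖ρ‖) (if p ρ then 1 else 0))
    {P : k[X]} {S : ℝ} {N : ℕ} (hP : IsDominantIndex R P.coeff S N) (hsplit : P.Splits) :
    (P.roots.filter p).card = N ∧ ‖P.leadingCoeff‖ * (P.roots.map (max 1 ‖·‖)).prod = S := by
  have hlc : P.leadingCoeff ≠ 0 := leadingCoeff_ne_zero.mpr <| by
    rintro rfl
    exact hP.pos.ne (by simpa using hP.norm_eq)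
  have hfac := (isDominantIndex_C hR hlc).mul hR (isDominantIndex_prod_X_sub_C hR p hlin P.roots)
  rw [← hsplit.eq_prod_roots, zero_add] at hfac
  obtain ⟨hS, hN⟩ := hfac.unique hR hP
  exact ⟨hN, hS⟩

theorem exists_mem_roots_norm_eq_one [IsUltrametricDist k] {P : k[X]} {S : ℝ} {m N : ℕ}
    (hsplit : P.Splits) (hlast : IsDominantIndex (· < ·) P.coeff S N)
    (hfirst : IsDominantIndex (· > ·) P.coeff S m) (hmN : m < N) :
    ∃ ρ ∈ P.roots, ‖ρ‖ = 1 := by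
  obtain ⟨hcard_le, -⟩ := hlast.card_roots_filter (.inl rfl) _ isDominantIndex_X_sub_C_lt hsplit
  obtain ⟨hcard_lt, -⟩ := hfirst.card_roots_filter (.inr rfl) _ isDominantIndex_X_sub_C_gt hsplit
  by_contra! hne
  have : P.roots.filter (‖·‖ ≤ 1) = P.roots.filter (‖·‖ < 1) :=
    Multiset.filter_congr fun ρ hρ => (hne ρ hρ).le_iff_lt
  rw [this] at hcard_le
  omega

theorem exists_mem_roots_mul_norm_sub_pow_le [IsUltrametricDist k] {P : k[X]} {S : ℝ} {N : ℕ}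
    (hsplit : P.Splits) (hlast : IsDominantIndex (· < ·) P.coeff S N) (hN : 0 < N)
    {z : k} (hz : ‖z‖ ≤ 1) :
    ∃ ρ ∈ P.roots, S * ‖z - ρ‖ ^ N ≤ ‖P.eval z‖ := by
  classical
  obtain ⟨hcard, hS⟩ := hlast.card_roots_filter (.inl rfl) _ isDominantIndex_X_sub_C_lt hsplit
  set Rs := P.roots.filter (‖·‖ ≤ 1)
  set Rb := P.roots.filter (¬‖·‖ ≤ 1)
  have hRs : Rs.toFinset.Nonempty := by
    rw [Multiset.toFinset_nonempty, ← Multiset.card_pos, hcard]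
    exact hN
  obtain ⟨ρ₀, hρ₀, hmin⟩ := Rs.toFinset.exists_min_image (‖z - ·‖) hRs
  rw [Multiset.mem_toFinset] at hρ₀
  refine ⟨ρ₀, Multiset.mem_of_mem_filter hρ₀, ?_⟩
  have hsplitR : Rs + Rb = P.roots := Multiset.filter_add_not _ _
  have hsmall : ‖z - ρ₀‖ ^ N ≤ (Rs.map (‖z - ·‖)).prod := by
    rw [← hcard, ← Multiset.prod_replicate, ← Multiset.map_const']
    exact Multiset.prod_map_le_prod_map₀ _ _ (fun _ _ => norm_nonneg _)
      fun ρ hρ => hmin ρ (Multiset.mem_toFinset.mpr hρ)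
  have hlarge : Rb.map (max 1 ‖·‖) = Rb.map (‖z - ·‖) := by
    refine Multiset.map_congr rfl fun ρ hρ => ?_
    have h1 : 1 < ‖ρ‖ := not_le.mp (Multiset.mem_filter.mp hρ).2
    rw [max_eq_right h1.le, norm_sub_eq_of_norm_lt (hz.trans_lt h1)]
  have hunit : (Rs.map (max 1 ‖·‖)).prod = 1 :=
    Multiset.prod_eq_one fun x hx => by
      obtain ⟨ρ, hρ, rfl⟩ := Multiset.mem_map.mp hx
      exact max_eq_left (Multiset.mem_filter.mp hρ).2
  have heval : ‖P.eval z‖ =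
      ‖P.leadingCoeff‖ * ((Rs.map (‖z - ·‖)).prod * (Rb.map (‖z - ·‖)).prod) := by
    rw [hsplit.eval_eq_prod_roots, norm_mul,
      show ‖(P.roots.map (z - ·)).prod‖ = _ from map_multiset_prod (normHom : k →*₀ ℝ) _,
      Multiset.map_map, ← hsplitR, Multiset.map_add, Multiset.prod_add]
    rfl
  rw [← hS, ← hsplitR, Multiset.map_add, Multiset.prod_add, hunit, hlarge, heval, one_mul,
    mul_assoc, mul_comm _ (‖z - ρ₀‖ ^ N)]
  gcongr
  exact Multiset.prod_map_nonneg fun _ _ => norm_nonneg _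

theorem IsDominantIndex.trunc_mk {b : ℕ → k} {S : ℝ} {N : ℕ} (h : IsDominantIndex R b S N)
    {M : ℕ} (hNM : N < M) :
    IsDominantIndex R (PowerSeries.trunc M (PowerSeries.mk b)).coeff S N := by
  refine ⟨h.pos, by simp [PowerSeries.coeff_trunc, hNM, h.norm_eq], fun n => ?_, fun n hn => ?_⟩
  all_goals rw [PowerSeries.coeff_trunc, PowerSeries.coeff_mk]; split_ifs
  · exact h.norm_le n
  · simpa using h.pos.le
  · exact h.norm_lt n hn
  · simpa using h.pos

theorem exists_isDominantIndex_of_ne {b : ℕ → k} (hb : Tendsto (‖b ·‖) atTop (𝓝 0))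
    {S : ℝ} (hS : 0 < S) (hle : ∀ n, ‖b n‖ ≤ S)
    {n₁ n₂ : ℕ} (hn : n₁ ≠ n₂) (h₁ : ‖b n₁‖ = S) (h₂ : ‖b n₂‖ = S) :
    ∃ m N, m < N ∧ IsDominantIndex (· > ·) b S m ∧ IsDominantIndex (· < ·) b S N := by
  classical
  obtain ⟨K, hK⟩ := eventually_atTop.mp (hb.eventually (gt_mem_nhds hS))
  have hbound : ∀ n, ‖b n‖ = S → n ≤ K := fun n hn =>
    le_of_not_ge fun h => (hK n h).ne hn
  have hex : ∃ n, ‖b n‖ = S := ⟨n₁, h₁⟩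
  set m := Nat.find hex
  set N := Nat.findGreatest (‖b ·‖ = S) K
  have hle_N : ∀ n, ‖b n‖ = S → n ≤ N := fun n hn =>
    Nat.le_findGreatest (P := (‖b ·‖ = S)) (hbound n hn) hn
  have hmN : m < N := by
    have := Nat.find_min' hex h₁
    have := Nat.find_min' hex h₂
    have := hle_N n₁ h₁
    have := hle_N n₂ h₂
    omega
  refine ⟨m, N, hmN, ⟨hS, Nat.find_spec hex, hle, fun n hn => ?_⟩,
    ⟨hS, Nat.findGreatest_spec (P := (‖b ·‖ = S)) (hbound n₁ h₁) h₁, hle, fun n hn => ?_⟩⟩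
  · exact (hle n).lt_of_ne (Nat.find_min hex hn)
  · exact (hle n).lt_of_ne fun h => (hle_N n h).not_gt hn

end Dominance

section Evaluation

variable {k : Type*} [NormedField k] [IsUltrametricDist k]

theorem norm_pow_sub_pow_le {z w : k} (hz : ‖z‖ ≤ 1) (hw : ‖w‖ ≤ 1) (n : ℕ) :
    ‖z ^ n - w ^ n‖ ≤ ‖z - w‖ := by
  rw [← geom_sum₂_mul, norm_mul]
  refine mul_le_of_le_one_left (norm_nonneg _) (norm_sum_le_of_forall_le_of_nonneg zero_le_one ?_)
  intro i _
  rw [norm_mul, norm_pow, norm_pow]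
  exact mul_le_one₀ (pow_le_one₀ (norm_nonneg _) hz) (by positivity)
    (pow_le_one₀ (norm_nonneg _) hw)

theorem norm_eval_sub_eval_le {P : k[X]} {S : ℝ} (hP : ∀ n, ‖P.coeff n‖ ≤ S) {z w : k}
    (hz : ‖z‖ ≤ 1) (hw : ‖w‖ ≤ 1) : ‖P.eval z - P.eval w‖ ≤ S * ‖z - w‖ := by
  have hS : 0 ≤ S := (norm_nonneg _).trans (hP 0)
  rw [eval_eq_sum_range, eval_eq_sum_range, ← Finset.sum_sub_distrib]
  refine norm_sum_le_of_forall_le_of_nonneg (mul_nonneg hS (norm_nonneg _)) fun n _ => ?_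
  rw [← mul_sub, norm_mul]
  exact mul_le_mul (hP n) (norm_pow_sub_pow_le hz hw n) (norm_nonneg _) hS

theorem norm_eval_trunc_sub_le {b : ℕ → k} {M M' : ℕ} (hMM' : M ≤ M') {ε : ℝ} (hε : 0 ≤ ε)
    (hb : ∀ n ≥ M, ‖b n‖ ≤ ε) {z : k} (hz : ‖z‖ ≤ 1) :
    ‖(PowerSeries.trunc M' (PowerSeries.mk b)).eval z -
      (PowerSeries.trunc M (PowerSeries.mk b)).eval z‖ ≤ ε := by
  rw [eval_trunc_mk, eval_trunc_mk, ← Finset.sum_Ico_eq_sub _ hMM']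
  refine norm_sum_le_of_forall_le_of_nonneg hε fun n hn => ?_
  rw [norm_mul, norm_pow]
  exact (mul_le_of_le_one_right (norm_nonneg _) (pow_le_one₀ (norm_nonneg _) hz)).trans
    (hb n (Finset.mem_Ico.mp hn).1)

theorem exists_root_trunc_mk_near [IsAlgClosed k] {b : ℕ → k} {S : ℝ} {N : ℕ}
    (hlast : IsDominantIndex (· < ·) b S N) (hN : 0 < N) {M M' : ℕ} (hMM' : M ≤ M')
    (hNM' : N < M') {η : ℝ} (hη : 0 ≤ η) (hη1 : η < 1) (htail : ∀ n ≥ M, ‖b n‖ ≤ S * η ^ N)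
    {z : k} (hz : ‖z‖ = 1) (hroot : (PowerSeries.trunc M (PowerSeries.mk b)).eval z = 0) :
    ∃ w, (‖w‖ = 1 ∧ (PowerSeries.trunc M' (PowerSeries.mk b)).eval w = 0) ∧ ‖z - w‖ ≤ η := by
  have hsmall := norm_eval_trunc_sub_le hMM' (by positivity [hlast.pos]) htail hz.le
  rw [hroot, sub_zero] at hsmall
  obtain ⟨w, hw, hzw⟩ := exists_mem_roots_mul_norm_sub_pow_le (IsAlgClosed.splits _)
    (hlast.trunc_mk hNM') hN hz.le
  have hdist : ‖z - w‖ ≤ η :=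
    (pow_le_pow_iff_left₀ (norm_nonneg _) hη hN.ne').mp
      (le_of_mul_le_mul_left (hzw.trans hsmall) hlast.pos)
  refine ⟨w, ⟨?_, (mem_roots'.mp hw).2⟩, hdist⟩
  have h := norm_sub_eq_of_norm_lt (x := z - w) (y := z) (by rw [hz]; exact hdist.trans_lt hη1)
  rwa [sub_sub_cancel_left, norm_neg, hz] at h

theorem tsum_eq_zero_of_tendsto_roots_trunc_mk [CompleteSpace k] {b : ℕ → k}
    (hb : Tendsto (‖b ·‖) atTop (𝓝 0)) {S : ℝ} (hle : ∀ n, ‖b n‖ ≤ S)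
    {M : ℕ → ℕ} (hM : Tendsto M atTop atTop) {z : ℕ → k} (hz : ∀ j, ‖z j‖ ≤ 1)
    (hroot : ∀ j, (PowerSeries.trunc (M j) (PowerSeries.mk b)).eval (z j) = 0)
    {w : k} (hw : ‖w‖ ≤ 1) (hzw : Tendsto z atTop (𝓝 w)) :
    ∑' n, b n * w ^ n = 0 := by
  have hsum : HasSum (fun n => b n * w ^ n) (∑' n, b n * w ^ n) := by
    refine (NonarchimedeanAddGroup.summable_of_tendsto_cofinite_zero ?_).hasSum
    rw [Nat.cofinite_eq_atTop]
    refine squeeze_zero_norm (fun n => ?_) hb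
    rw [norm_mul, norm_pow]
    exact mul_le_of_le_one_right (norm_nonneg _) (pow_le_one₀ (norm_nonneg _) hw)
  have hlim : Tendsto (fun j => (PowerSeries.trunc (M j) (PowerSeries.mk b)).eval w) atTop
      (𝓝 (∑' n, b n * w ^ n)) := by
    refine (hsum.tendsto_sum_nat.comp hM).congr fun j => ?_
    simp [eval_trunc_mk]
  have hcoeff : ∀ M n, ‖(PowerSeries.trunc M (PowerSeries.mk b)).coeff n‖ ≤ S := fun M n => by
    rw [PowerSeries.coeff_trunc, PowerSeries.coeff_mk]
    split_ifs
    exacts [hle n, by simpa using (norm_nonneg _).trans (hle 0)]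
  refine tendsto_nhds_unique hlim (squeeze_zero_norm (fun j => ?_)
    (by simpa using (hzw.sub_const w).norm.const_mul S))
  rw [← sub_zero (Polynomial.eval w _), ← hroot j, norm_sub_rev (z j)]
  exact norm_eval_sub_eval_le (hcoeff _) hw (hz j)

end Evaluation

theorem exists_norm_eq_one_tsum_eq_zero {k : Type*} [NormedField k] [IsUltrametricDist k]
    [IsAlgClosed k] [CompleteSpace k] {b : ℕ → k} (hb : Tendsto (‖b ·‖) atTop (𝓝 0))
    {S : ℝ} {m N : ℕ} (hmN : m < N) (hlast : IsDominantIndex (· < ·) b S N)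
    (hfirst : IsDominantIndex (· > ·) b S m) :
    ∃ w : k, ‖w‖ = 1 ∧ ∑' n, b n * w ^ n = 0 := by
  set P : ℕ → k[X] := fun M => PowerSeries.trunc M (PowerSeries.mk b)
  set η : ℕ → ℝ := fun j => 2⁻¹ ^ (j + 1)
  have hη : ∀ j, 0 < η j := fun j => by positivity
  have hη1 : ∀ j, η j < 1 := fun j => pow_lt_one₀ (by norm_num) (by norm_num) (by omega)
  obtain ⟨M, hM, hspec⟩ := extraction_forall_of_eventually fun j =>
    (eventually_gt_atTop N).and <| eventually_forall_ge_atTop.mpr <|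
      hb.eventually (ge_mem_nhds (mul_pos hlast.pos (pow_pos (hη j) N)))
  have hstep : ∀ j z, ‖z‖ = 1 → (P (M j)).eval z = 0 →
      ∃ w, (‖w‖ = 1 ∧ (P (M (j + 1))).eval w = 0) ∧ ‖z - w‖ ≤ η j := fun j _ hz hroot =>
    exists_root_trunc_mk_near hlast (m.zero_le.trans_lt hmN) (hM.monotone j.le_succ)
      (hspec (j + 1)).1 (hη j).le (hη1 j) (hspec j).2 hz hroot
  obtain ⟨z₀, hz₀, hz₀1⟩ := exists_mem_roots_norm_eq_one (IsAlgClosed.splits _)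
    (hlast.trunc_mk (hspec 0).1) (hfirst.trunc_mk (hmN.trans (hspec 0).1)) hmN
  choose! next hnext using hstep
  let z : ℕ → k := fun j => Nat.rec z₀ next j
  have hz : ∀ j, ‖z j‖ = 1 ∧ (P (M j)).eval (z j) = 0 := by
    intro j
    induction j with
    | zero => exact ⟨hz₀1, (mem_roots'.mp hz₀).2⟩
    | succ j ih => exact (hnext j (z j) ih.1 ih.2).1
  have hcauchy : CauchySeq z := cauchySeq_of_le_geometric 2⁻¹ 2⁻¹ (by norm_num) fun j => by
    rw [dist_eq_norm, ← pow_succ']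
    exact (hnext j (z j) (hz j).1 (hz j).2).2
  obtain ⟨w, hzw⟩ := cauchySeq_tendsto_of_complete hcauchy
  have hw : ‖w‖ = 1 := tendsto_nhds_unique hzw.norm (by simp only [(hz _).1, tendsto_const_nhds])
  exact ⟨w, hw, tsum_eq_zero_of_tendsto_roots_trunc_mk hb hlast.norm_le
    hM.tendsto_atTop (fun j => (hz j).1.le) (fun j => (hz j).2) hw.le hzw⟩

theorem corner_gives_zero_general
    (k : Type*) [NontriviallyNormedField k] [IsAlgClosed k] [CompleteSpace k]
    [IsUltrametricDist k]
    (a : ℕ → k) (r : ℝ)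
    (hdecay : Tendsto (fun n => ‖a n‖ * r ^ n) atTop (nhds 0))
    (hne : ∃ n, a n ≠ 0)
    (t : ℝ) (d : k) (hd : d ≠ 0) (ht : t = ‖d‖) (htr : t ≤ r)
    (n₁ n₂ : ℕ) (hnn : n₁ ≠ n₂)
    (h₁ : ‖a n₁‖ * t ^ n₁ = ⨆ n : ℕ, ‖a n‖ * t ^ n)
    (h₂ : ‖a n₂‖ * t ^ n₂ = ⨆ n : ℕ, ‖a n‖ * t ^ n) :
    ∃ z₀ : k, ‖z₀‖ = t ∧ ∑' n : ℕ, a n * z₀ ^ n = 0 := by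
  set b : ℕ → k := fun n => a n * d ^ n
  have hbn : ∀ n, ‖b n‖ = ‖a n‖ * t ^ n := fun n => by simp [b, ht]
  have hb : Tendsto (‖b ·‖) atTop (𝓝 0) := by
    refine squeeze_zero (fun n => norm_nonneg _) (fun n => ?_) hdecay
    rw [hbn]
    gcongr
    exact ht ▸ norm_nonneg d
  simp only [← hbn] at h₁ h₂
  have hle : ∀ n, ‖b n‖ ≤ ⨆ n, ‖b n‖ := le_ciSup hb.bddAbove_range
  obtain ⟨n₀, hn₀⟩ := hne
  have hS : 0 < ⨆ n, ‖b n‖ :=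
    (norm_pos_iff.mpr (mul_ne_zero hn₀ (pow_ne_zero n₀ hd))).trans_le (hle n₀)
  obtain ⟨m, N, hmN, hfirst, hlast⟩ := exists_isDominantIndex_of_ne hb hS hle hnn h₁ h₂
  obtain ⟨w, hw, hroot⟩ := exists_norm_eq_one_tsum_eq_zero hb hmN hlast hfirst
  refine ⟨d * w, by rw [norm_mul, hw, mul_one, ht], ?_⟩
  simpa [b, mul_pow, mul_assoc] using hroot

/-- Newton polygon corners force zeros: if the Gauss norm at radius `t ∈ (0,r] ∩ |k*|`
is attained at two distinct indices, then the (nonzero) power series has a zero of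
absolute value exactly `t`. -/
theorem corner_gives_zero
    (k : Type*) [NontriviallyNormedField k] [IsAlgClosed k] [CompleteSpace k]
    [IsUltrametricDist k]
    (a : ℕ → k) (c : k) (hc : c ≠ 0) (r : ℝ) (hr : r = ‖c‖)
    (hdecay : Tendsto (fun n => ‖a n‖ * r ^ n) atTop (nhds 0))
    (hne : ∃ n, a n ≠ 0)
    (t : ℝ) (d : k) (hd : d ≠ 0) (ht : t = ‖d‖) (htpos : 0 < t) (htr : t ≤ r)
    (n₁ n₂ : ℕ) (hnn : n₁ ≠ n₂)
    (h₁ : ‖a n₁‖ * t ^ n₁ = ⨆ n : ℕ, ‖a n‖ * t ^ n)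
    (h₂ : ‖a n₂‖ * t ^ n₂ = ⨆ n : ℕ, ‖a n‖ * t ^ n) :
    ∃ z₀ : k, ‖z₀‖ = t ∧ ∑' n : ℕ, a n * z₀ ^ n = 0 :=
  corner_gives_zero_general k a r hdecay hne t d hd ht htr n₁ n₂ hnn h₁ h₂
end

section
/- Non-Archimedean open mapping / image of a disc: let k be an algebraically closed field complete with respect to a nontrivial non-Archimedean absolute value, r ∈ |k*|, and f = Σ_{n≥0} aₙ zⁿ a non-constant power series with |aₙ| rⁿ → 0. Let m ≥ 1 be minimal with a_m ≠ 0 and set δ = sup_{n≥m} |aₙ| rⁿ. Then the image of {z ∈ k : |z| ≤ r} under f is exactly the closed disc {w ∈ k : |w − a₀| ≤ δ}. -/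
/-!
Fix `w` with `‖w - a₀‖ ≤ δ` and let `N ≥ 1` be the last index with `‖a_N‖ rᴺ = δ`. If `y` is a
root of smallest norm of a polynomial `g` over an algebraically closed ultrametric field, then
`‖g_N‖ ‖y‖ᴺ ≤ ‖g₀‖`, because the Gauss norm at radius `‖y‖` is submultiplicative and equals `‖α‖`
on each linear factor `X - α`. A truncation of `f - w`, re-expanded around a point `z` of the disc,
keeps `N` as its last dominant index, so its `N`-th coefficient still has norm `δ / rᴺ`; hence it
vanishes at some `z'` with `δ ‖z' - z‖ᴺ ≤ ‖f z - w‖ rᴺ`, up to the truncation error. Truncating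
further and further out produces a Cauchy sequence whose limit is a preimage of `w`.
-/

open Filter Topology Polynomial

theorem exists_forall_le_and_lt_of_tendsto_zero {u : ℕ → ℝ} (hu : Tendsto u atTop (𝓝 0)) {i : ℕ}
    (hi : 0 < u i) : ∃ N, (∀ n, u n ≤ u N) ∧ ∀ n, N < n → u n < u N := by
  have hfin : ∀ {c : ℝ}, 0 < c → {n | c ≤ u n}.Finite := fun hc => by
    simpa [← Nat.cofinite_eq_atTop] using hu.eventually_lt_const hc
  obtain ⟨n₀, hn₀, hmax⟩ := Set.exists_max_image _ u (hfin hi) ⟨i, le_refl (u i)⟩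
  obtain ⟨N, hN, hlast⟩ := Set.exists_max_image _ id (hfin (hi.trans_le hn₀)) ⟨n₀, le_refl (u n₀)⟩
  refine ⟨N, fun n => ((le_or_gt (u i) (u n)).elim (hmax n) fun h => h.le.trans hn₀).trans hN,
    fun n hn => ?_⟩
  by_contra! h
  exact hn.not_ge (hlast n (hN.trans h))

namespace Polynomial

variable {k : Type*} [NormedField k] [IsUltrametricDist k]

theorem Splits.exists_isRoot_norm_coeff_mul_pow_le {P : k[X]} (hP : P.Splits) {N : ℕ}
    (hN : N ≠ 0) (hPN : P.coeff N ≠ 0) :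
    ∃ y, P.IsRoot y ∧ ‖P.coeff N‖ * ‖y‖ ^ N ≤ ‖P.coeff 0‖ := by
  classical
  have hP0 : P ≠ 0 := by rintro rfl; simp at hPN
  have hroots : P.roots.toFinset.Nonempty := by
    have := le_natDegree_of_ne_zero hPN
    rw [Multiset.toFinset_nonempty, ← Multiset.card_pos, ← hP.natDegree_eq_card_roots]
    omega
  obtain ⟨y, hyR, hymin⟩ := P.roots.toFinset.exists_min_image (‖·‖) hroots
  rw [Multiset.mem_toFinset, mem_roots hP0] at hyR
  refine ⟨y, hyR, ?_⟩
  set v := NormedField.toAbsoluteValue k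
  have hv : IsNonarchimedean v := IsUltrametricDist.isNonarchimedean_norm
  have hμ : 0 ≤ ‖y‖ := norm_nonneg y
  let CoeffZeroDominates : k[X] → Prop := fun p => p.gaussNorm v ‖y‖ ≤ ‖p.coeff 0‖
  have hmul : ∀ p q, CoeffZeroDominates p → CoeffZeroDominates q → CoeffZeroDominates (p * q) := by
    intro p q hp hq
    calc (p * q).gaussNorm v ‖y‖ ≤ p.gaussNorm v ‖y‖ * q.gaussNorm v ‖y‖ :=
          gaussNorm_mul_le v hv p q hμ
      _ ≤ ‖(p * q).coeff 0‖ := by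
          rw [mul_coeff_zero, norm_mul]
          exact mul_le_mul hp hq (gaussNorm_nonneg v _ hμ) (norm_nonneg _)
  have hlin : ∀ α ∈ P.roots, CoeffZeroDominates (X - C α) := by
    intro α hα
    have hyα : ‖y‖ ≤ ‖α‖ := hymin α (Multiset.mem_toFinset.2 hα)
    calc (X - C α).gaussNorm v ‖y‖ ≤ max (X.gaussNorm v ‖y‖) ((-C α).gaussNorm v ‖y‖) := by
          rw [sub_eq_add_neg]; exact isNonarchimedean_gaussNorm v hv hμ _ _
      _ ≤ ‖(X - C α).coeff 0‖ := by
          rw [← C_neg, ← monomial_one_one_eq_X, gaussNorm_C, gaussNorm_monomial]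
          simpa [v, NormedField.toAbsoluteValue] using hyα
  have hPdom : CoeffZeroDominates P := by
    rw [hP.eq_prod_roots]
    refine hmul _ _ (by simp [CoeffZeroDominates, v, NormedField.toAbsoluteValue]) ?_
    refine Multiset.prod_induction CoeffZeroDominates _ hmul ?_ ?_
    · simp [CoeffZeroDominates, ← C_1, -map_one, v, NormedField.toAbsoluteValue]
    simp only [Multiset.mem_map]
    rintro _ ⟨α, hα, rfl⟩
    exact hlin α hα
  exact (P.le_gaussNorm v hμ N).trans hPdom

theorem norm_coeff_taylor_of_lt {g : k[X]} {z : k} {r : ℝ} (hz : ‖z‖ ≤ r) {N : ℕ}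
    (hN : ∀ n, N < n → ‖g.coeff n‖ * r ^ n < ‖g.coeff N‖ * r ^ N) :
    ‖(taylor z g).coeff N‖ = ‖g.coeff N‖ := by
  have hr : 0 ≤ r := (norm_nonneg z).trans hz
  rw [taylor_coeff, eval_eq_sum_range' (n := g.natDegree + 1)
    ((natDegree_hasseDeriv_le g N).trans_lt (by omega)),
    IsNonarchimedean.apply_sum_eq_of_lt IsUltrametricDist.isNonarchimedean_norm
      (fun x => (norm_neg x).symm) (k := 0) (by simp)]
  · simp [hasseDeriv_coeff]
  intro j _ hj
  simp only [hasseDeriv_coeff, pow_zero, mul_one, zero_add, Nat.choose_self, Nat.cast_one, one_mul]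
  refine lt_of_mul_lt_mul_right ?_ (pow_nonneg hr N)
  calc ‖((j + N).choose N : k) * g.coeff (j + N) * z ^ j‖ * r ^ N
      ≤ ‖g.coeff (j + N)‖ * r ^ (j + N) := by
        rw [norm_mul, norm_mul, norm_pow, pow_add, ← mul_assoc]
        gcongr
        exact (mul_le_of_le_one_left (norm_nonneg _) (IsUltrametricDist.norm_natCast_le_one k _))
    _ < ‖g.coeff N‖ * r ^ N := hN _ (by omega)

theorem exists_isRoot_norm_sub_pow_le [IsAlgClosed k] {g : k[X]} {z : k} {r δ : ℝ}
    (hz : ‖z‖ ≤ r) {N : ℕ} (hN0 : N ≠ 0) (hN : ‖g.coeff N‖ * r ^ N = δ)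
    (hlt : ∀ n, N < n → ‖g.coeff n‖ * r ^ n < δ) :
    ∃ z', g.IsRoot z' ∧ δ * ‖z' - z‖ ^ N ≤ ‖g.eval z‖ * r ^ N := by
  have hr : 0 ≤ r := (norm_nonneg z).trans hz
  have hδ : 0 < δ :=
    (by positivity : 0 ≤ ‖g.coeff (N + 1)‖ * r ^ (N + 1)).trans_lt (hlt _ N.lt_succ_self)
  have hcoeff : ‖(taylor z g).coeff N‖ = ‖g.coeff N‖ := norm_coeff_taylor_of_lt hz (hN ▸ hlt)
  have hne : (taylor z g).coeff N ≠ 0 := by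
    rw [← norm_pos_iff, hcoeff]
    exact pos_of_mul_pos_left (hN ▸ hδ) (pow_nonneg hr N)
  obtain ⟨y, hy, hle⟩ := (IsAlgClosed.splits _).exists_isRoot_norm_coeff_mul_pow_le hN0 hne
  refine ⟨y + z, by simpa [IsRoot, taylor_eval] using hy, ?_⟩
  rw [← hN, ← hcoeff, add_sub_cancel_right, ← taylor_coeff_zero]
  calc ‖(taylor z g).coeff N‖ * r ^ N * ‖y‖ ^ N
      = ‖(taylor z g).coeff N‖ * ‖y‖ ^ N * r ^ N := by ring
    _ ≤ ‖(taylor z g).coeff 0‖ * r ^ N := by gcongr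

end Polynomial

section DiscSeries

variable {k : Type*} [NormedField k] [IsUltrametricDist k] {a : ℕ → k} {r δ : ℝ} {N : ℕ}

theorem exists_sum_range_mul_pow_eq_near [IsAlgClosed k] {M : ℕ} (hNM : N < M) (hN0 : N ≠ 0)
    (hN : ‖a N‖ * r ^ N = δ) (hlt : ∀ n, N < n → ‖a n‖ * r ^ n < δ) (w : k) {z : k}
    (hz : ‖z‖ ≤ r) :
    ∃ z', ∑ n ∈ Finset.range M, a n * z' ^ n = w ∧
      δ * ‖z' - z‖ ^ N ≤ ‖∑ n ∈ Finset.range M, a n * z ^ n - w‖ * r ^ N := by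
  set g : k[X] := PowerSeries.trunc M (PowerSeries.mk a) - C w
  have hcoeff : ∀ n, n ≠ 0 → g.coeff n = if n < M then a n else 0 := by
    intro n hn
    simp [g, PowerSeries.coeff_trunc, coeff_C, hn]
  have heval : ∀ x, g.eval x = ∑ n ∈ Finset.range M, a n * x ^ n - w := by
    intro x
    simp [g, eval, PowerSeries.eval₂_trunc_eq_sum_range]
  have hr : 0 ≤ r := (norm_nonneg z).trans hz
  have hδ : 0 < δ :=
    (by positivity : 0 ≤ ‖a (N + 1)‖ * r ^ (N + 1)).trans_lt (hlt _ N.lt_succ_self)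
  obtain ⟨z', hroot, hdist⟩ := Polynomial.exists_isRoot_norm_sub_pow_le (g := g) (δ := δ) hz hN0
    (by rwa [hcoeff N hN0, if_pos hNM])
    (fun n hn => by
      rw [hcoeff n (by omega)]
      split_ifs
      · exact hlt n hn
      · simpa using hδ)
  exact ⟨z', sub_eq_zero.1 ((heval z').symm.trans hroot), heval z ▸ hdist⟩

variable [CompleteSpace k]

theorem summable_mul_pow_of_tendsto (ha : Tendsto (fun n => ‖a n‖ * r ^ n) atTop (𝓝 0))
    {z : k} (hz : ‖z‖ ≤ r) : Summable fun n => a n * z ^ n := by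
  apply NonarchimedeanAddGroup.summable_of_tendsto_cofinite_zero
  rw [Nat.cofinite_eq_atTop, tendsto_zero_iff_norm_tendsto_zero]
  refine squeeze_zero (fun n => norm_nonneg _) (fun n => ?_) ha
  rw [norm_mul, norm_pow]
  gcongr

theorem norm_tsum_sub_sum_range_le (ha : Tendsto (fun n => ‖a n‖ * r ^ n) atTop (𝓝 0))
    {z : k} (hz : ‖z‖ ≤ r) {M : ℕ} {B : ℝ} (hB : 0 ≤ B)
    (h : ∀ n, M ≤ n → ‖a n‖ * r ^ n ≤ B) :
    ‖∑' n, a n * z ^ n - ∑ n ∈ Finset.range M, a n * z ^ n‖ ≤ B := by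
  rw [← (summable_mul_pow_of_tendsto ha hz).sum_add_tsum_nat_add M, add_sub_cancel_left]
  refine IsUltrametricDist.norm_tsum_le_of_forall_le_of_nonneg hB fun n => ?_
  rw [norm_mul, norm_pow]
  calc ‖a (n + M)‖ * ‖z‖ ^ (n + M) ≤ ‖a (n + M)‖ * r ^ (n + M) := by gcongr
    _ ≤ B := h _ (Nat.le_add_left M n)

theorem continuousOn_tsum_mul_pow (ha : Tendsto (fun n => ‖a n‖ * r ^ n) atTop (𝓝 0)) :
    ContinuousOn (fun z => ∑' n, a n * z ^ n) (Metric.closedBall 0 r) := by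
  refine TendstoUniformlyOn.continuousOn (F := fun M z => ∑ n ∈ Finset.range M, a n * z ^ n) ?_
    (Frequently.of_forall (f := atTop) fun M => by fun_prop)
  rw [Metric.tendstoUniformlyOn_iff]
  intro ε hε
  obtain ⟨M, hM⟩ := eventually_atTop.1 (ha.eventually (ge_mem_nhds (half_pos hε)))
  refine eventually_atTop.2 ⟨M, fun M' hM' z hz => ?_⟩
  rw [dist_eq_norm]
  refine (norm_tsum_sub_sum_range_le ha (mem_closedBall_zero_iff.1 hz) (half_pos hε).le
    fun n hn => hM n (hM'.trans hn)).trans_lt (half_lt_self hε)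

theorem tsum_mul_pow_eq_of_tendsto (ha : Tendsto (fun n => ‖a n‖ * r ^ n) atTop (𝓝 0))
    {u : ℕ → k} {L w : k} (hu : ∀ τ, ‖u τ‖ ≤ r) (hL : Tendsto u atTop (𝓝 L))
    (hw : Tendsto (fun τ => ∑' n, a n * u τ ^ n) atTop (𝓝 w)) :
    ‖L‖ ≤ r ∧ ∑' n, a n * L ^ n = w := by
  have hLr : ‖L‖ ≤ r := le_of_tendsto' hL.norm hu
  refine ⟨hLr, tendsto_nhds_unique ?_ hw⟩
  exact ((continuousOn_tsum_mul_pow ha) L (mem_closedBall_zero_iff.2 hLr)).tendsto.comp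
    (tendsto_nhdsWithin_iff.2 ⟨hL, Eventually.of_forall fun τ => mem_closedBall_zero_iff.2 (hu τ)⟩)

variable [IsAlgClosed k]

theorem exists_near_tsum_mul_pow_sub_le_mul (ha : Tendsto (fun n => ‖a n‖ * r ^ n) atTop (𝓝 0))
    (hN0 : N ≠ 0) (hN : ‖a N‖ * r ^ N = δ) (hlt : ∀ n, N < n → ‖a n‖ * r ^ n < δ)
    {w z : k} (hz : ‖z‖ ≤ r) (hzw : ‖∑' n, a n * z ^ n - w‖ ≤ δ) {q : ℝ} (hq0 : 0 < q)
    (hq1 : q ≤ 1) :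
    ∃ z', ‖z'‖ ≤ r ∧ δ * ‖z' - z‖ ^ N ≤ ‖∑' n, a n * z ^ n - w‖ * r ^ N ∧
      ‖∑' n, a n * z' ^ n - w‖ ≤ q * ‖∑' n, a n * z ^ n - w‖ := by
  set e := ‖∑' n, a n * z ^ n - w‖
  rcases (show 0 ≤ e from norm_nonneg _).eq_or_lt with he | he
  · exact ⟨z, hz, by simp [← he, hN0], he.symm.le.trans (by rw [← he, mul_zero])⟩
  have hr : 0 ≤ r := (norm_nonneg z).trans hz
  have hδ : 0 < δ :=
    (by positivity : 0 ≤ ‖a (N + 1)‖ * r ^ (N + 1)).trans_lt (hlt _ N.lt_succ_self)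
  obtain ⟨M₀, hM₀⟩ := eventually_atTop.1 (ha.eventually (ge_mem_nhds (mul_pos hq0 he)))
  set M := max M₀ (N + 1)
  have htail : ∀ x : k, ‖x‖ ≤ r →
      ‖∑' n, a n * x ^ n - ∑ n ∈ Finset.range M, a n * x ^ n‖ ≤ q * e := fun x hx =>
    norm_tsum_sub_sum_range_le ha hx (by positivity) fun n hn => hM₀ n (le_of_max_le_left hn)
  obtain ⟨z', hz'w, hdist⟩ :=
    exists_sum_range_mul_pow_eq_near (M := M) (by omega) hN0 hN hlt w hz
  have hdist' : δ * ‖z' - z‖ ^ N ≤ e * r ^ N := by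
    refine hdist.trans (mul_le_mul_of_nonneg_right ?_ (by positivity))
    rw [← sub_add_sub_cancel _ (∑' n, a n * z ^ n)]
    refine (IsUltrametricDist.norm_add_le_max _ _).trans (max_le ?_ le_rfl)
    rw [norm_sub_rev]
    exact (htail z hz).trans (mul_le_of_le_one_left he.le hq1)
  have hz'z : ‖z' - z‖ ≤ r := by
    rw [← pow_le_pow_iff_left₀ (norm_nonneg _) hr hN0]
    refine le_of_mul_le_mul_left (hdist'.trans ?_) hδ
    exact mul_le_mul_of_nonneg_right hzw (by positivity)
  have hz' : ‖z'‖ ≤ r := by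
    rw [← sub_add_cancel z' z]
    exact (IsUltrametricDist.norm_add_le_max _ _).trans (max_le hz'z hz)
  exact ⟨z', hz', hdist', by simpa [hz'w] using htail z' hz'⟩

theorem exists_tsum_mul_pow_eq (ha : Tendsto (fun n => ‖a n‖ * r ^ n) atTop (𝓝 0))
    (hr : 0 ≤ r) (hN0 : N ≠ 0) (hN : ‖a N‖ * r ^ N = δ)
    (hlt : ∀ n, N < n → ‖a n‖ * r ^ n < δ) {w : k} (hw : ‖w - a 0‖ ≤ δ) :
    ∃ z, ‖z‖ ≤ r ∧ ∑' n, a n * z ^ n = w := by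
  set f : k → k := fun z => ∑' n, a n * z ^ n
  set θ : ℝ := 2⁻¹
  have hθ0 : 0 < θ := by norm_num
  have hθ1 : θ < 1 := by norm_num
  have step : ∀ z, ‖z‖ ≤ r → ‖f z - w‖ ≤ δ → ∃ z', ‖z'‖ ≤ r ∧
      δ * ‖z' - z‖ ^ N ≤ ‖f z - w‖ * r ^ N ∧ ‖f z' - w‖ ≤ θ ^ N * ‖f z - w‖ :=
    fun z hz hzw => exists_near_tsum_mul_pow_sub_le_mul ha hN0 hN hlt hz hzw (by positivity)
      (pow_le_one₀ hθ0.le hθ1.le)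
  choose! next hnext_r hnext_dist hnext_val using step
  set u : ℕ → k := fun τ => next^[τ] 0
  have hδ : 0 < δ :=
    (by positivity : 0 ≤ ‖a (N + 1)‖ * r ^ (N + 1)).trans_lt (hlt _ N.lt_succ_self)
  have hθN : θ ^ N ≤ 1 := pow_le_one₀ hθ0.le hθ1.le
  have hδθ : ∀ τ, δ * (θ ^ N) ^ τ ≤ δ := fun τ =>
    mul_le_of_le_one_right hδ.le (pow_le_one₀ (by positivity) hθN)
  have hu : ∀ τ, ‖u τ‖ ≤ r ∧ ‖f (u τ) - w‖ ≤ δ * (θ ^ N) ^ τ := by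
    intro τ
    induction τ with
    | zero => simpa [u, f, hr, norm_sub_rev, zero_pow_eq, tsum_ite_eq] using hw
    | succ τ ih =>
      have hle : ‖f (u τ) - w‖ ≤ δ := ih.2.trans (hδθ τ)
      simp only [u, Function.iterate_succ_apply']
      refine ⟨hnext_r _ ih.1 hle, (hnext_val _ ih.1 hle).trans ?_⟩
      calc θ ^ N * ‖f (u τ) - w‖ ≤ θ ^ N * (δ * (θ ^ N) ^ τ) := by gcongr; exact ih.2
        _ = δ * (θ ^ N) ^ (τ + 1) := by ring
  have hle : ∀ τ, ‖f (u τ) - w‖ ≤ δ := fun τ => (hu τ).2.trans (hδθ τ)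
  have hstep : ∀ τ, dist (u τ) (u (τ + 1)) ≤ r * θ ^ τ := by
    intro τ
    rw [dist_comm, dist_eq_norm, ← pow_le_pow_iff_left₀ (norm_nonneg _) (by positivity) hN0]
    refine le_of_mul_le_mul_left ?_ hδ
    calc δ * ‖u (τ + 1) - u τ‖ ^ N ≤ ‖f (u τ) - w‖ * r ^ N := by
          simpa only [u, Function.iterate_succ_apply'] using hnext_dist _ (hu τ).1 (hle τ)
      _ ≤ δ * (θ ^ N) ^ τ * r ^ N := by gcongr; exact (hu τ).2
      _ = δ * (r * θ ^ τ) ^ N := by ring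
  obtain ⟨L, hL⟩ := cauchySeq_tendsto_of_complete (cauchySeq_of_le_geometric θ r hθ1 hstep)
  refine ⟨L, tsum_mul_pow_eq_of_tendsto ha (fun τ => (hu τ).1) hL ?_⟩
  rw [tendsto_iff_norm_sub_tendsto_zero]
  refine squeeze_zero (fun τ => norm_nonneg _) (fun τ => (hu τ).2) ?_
  simpa using (tendsto_pow_atTop_nhds_zero_of_lt_one (by positivity)
    (pow_lt_one₀ hθ0.le hθ1 hN0)).const_mul δ

theorem image_tsum_mul_pow_closedBall (ha : Tendsto (fun n => ‖a n‖ * r ^ n) atTop (𝓝 0))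
    (hr : 0 ≤ r) (hle : ∀ n, 1 ≤ n → ‖a n‖ * r ^ n ≤ δ) (hN0 : N ≠ 0)
    (hN : ‖a N‖ * r ^ N = δ) (hlt : ∀ n, N < n → ‖a n‖ * r ^ n < δ) :
    (fun z => ∑' n, a n * z ^ n) '' Metric.closedBall 0 r = Metric.closedBall (a 0) δ := by
  ext w
  simp only [Set.mem_image, mem_closedBall_iff_norm, sub_zero]
  constructor
  · rintro ⟨z, hz, rfl⟩
    simpa using norm_tsum_sub_sum_range_le ha hz (hN ▸ by positivity) hle
  · intro hw
    exact exists_tsum_mul_pow_eq ha hr hN0 hN hlt hw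

end DiscSeries

/-- Image of a disc: for a non-constant power series convergent on the closed disc of
radius `r ∈ |k*|`, with `m ≥ 1` the minimal index with `a_m ≠ 0` and
`δ = sup_{n ≥ m} ‖aₙ‖ rⁿ`, the image of the closed disc of radius `r` is exactly the
closed disc of radius `δ` centered at `a₀`. -/
theorem image_of_disc
    (k : Type*) [NontriviallyNormedField k] [IsAlgClosed k] [CompleteSpace k]
    [IsUltrametricDist k]
    (a : ℕ → k) (c : k) (hc : c ≠ 0) (r : ℝ) (hr : r = ‖c‖)
    (hdecay : Tendsto (fun n => ‖a n‖ * r ^ n) atTop (nhds 0))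
    (m : ℕ) (hm1 : 1 ≤ m) (ham : a m ≠ 0)
    (hmin : ∀ n, 1 ≤ n → n < m → a n = 0)
    (δ : ℝ) (hδ : δ = ⨆ n : ℕ, ‖a (m + n)‖ * r ^ (m + n)) :
    (fun z : k => ∑' n : ℕ, a n * z ^ n) '' {z : k | ‖z‖ ≤ r}
      = {w : k | ‖w - a 0‖ ≤ δ} := by
  have hr0 : 0 < r := hr ▸ norm_pos_iff.2 hc
  have hshift : Tendsto (fun n => ‖a (m + n)‖ * r ^ (m + n)) atTop (𝓝 0) := by
    simpa only [add_comm m] using (tendsto_add_atTop_iff_nat m).2 hdecay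
  obtain ⟨N, hmax, hlast⟩ := exists_forall_le_and_lt_of_tendsto_zero hshift (i := 0)
    (by simpa using mul_pos (norm_pos_iff.2 ham) (pow_pos hr0 m))
  have hδN : ‖a (m + N)‖ * r ^ (m + N) = δ :=
    (hδ.trans (ciSup_eq_of_forall_le_of_forall_lt_exists_gt hmax fun _ h => ⟨N, h⟩)).symm
  have hle : ∀ n, 1 ≤ n → ‖a n‖ * r ^ n ≤ δ := by
    intro n hn
    rcases lt_or_ge n m with hnm | hnm
    · simpa [hmin n hn hnm] using hδN ▸ by positivity
    · obtain ⟨j, rfl⟩ := Nat.exists_eq_add_of_le hnm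
      exact hδN ▸ hmax j
  have hlt : ∀ n, m + N < n → ‖a n‖ * r ^ n < δ := by
    intro n hn
    obtain ⟨j, rfl⟩ := Nat.exists_eq_add_of_le (show m ≤ n by omega)
    exact hδN ▸ hlast j (by omega)
  simpa [Metric.closedBall, dist_eq_norm] using
    image_tsum_mul_pow_closedBall hdecay hr0.le hle (by omega) hδN hlt
end

section
/- Let k be an algebraically closed complete non-Archimedean valued field, r ∈ |k*|, and let f be a power series convergent on the closed disc D(r) with only finitely many zeros there. Then f factors as f = P · u where P is a polynomial whose roots are exactly the zeros of f in D(r) (with multiplicity) and u is a power series convergent and nowhere vanishing on D(r) (Weierstrass factorization on a non-Archimedean disc). -/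
/-!
Write `t n = ‖a n‖ * r ^ n` and let `N` be the last index at which `t` attains its maximum. If
`N = 0`, the constant term strictly dominates all other terms on the disc, so by the ultrametric
inequality `f` has no zero there. If `f z₀ = 0` with `‖z₀‖ ≤ r`, then `f z = (z - z₀) * g z`
where `g` has coefficients `∑ₘ a (n + 1 + m) * z₀ ^ m`; the ultrametric inequality shows that
`g` again converges on the disc and that its own `N` drops by exactly one. Induction on `N`
therefore splits off at most `N` linear factors and ends with a series without zeros.
-/

open Filter Topology

theorem IsUltrametricDist.norm_tsum_lt_of_forall_lt_s16 {ι E : Type*} [Nonempty ι]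
    [SeminormedAddCommGroup E] [IsUltrametricDist E] {f : ι → E} {M : ℝ}
    (h : ∀ i, ‖f i‖ < M) : ‖∑' i, f i‖ < M := by
  have hM : 0 < M := (norm_nonneg _).trans_lt (h (Classical.arbitrary ι))
  by_cases hf : Summable f
  swap
  · simpa [tsum_eq_zero_of_not_summable hf] using hM
  have hfin : {i | M / 2 ≤ ‖f i‖}.Finite := by
    have := hf.tendsto_cofinite_zero.norm.eventually
      (gt_mem_nhds (by rw [norm_zero]; exact half_pos hM))
    simpa only [eventually_cofinite, not_lt] using this
  -- the terms tend to zero, so their supremum is attained or below `M / 2`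
  obtain ⟨C, hCM, hC⟩ : ∃ C < M, ∀ i, ‖f i‖ ≤ C := by
    rcases Set.eq_empty_or_nonempty {i | M / 2 ≤ ‖f i‖} with hempty | hne
    · refine ⟨M / 2, half_lt_self hM, fun i => le_of_lt ?_⟩
      simpa using Set.eq_empty_iff_forall_notMem.1 hempty i
    · obtain ⟨i₀, -, hi₀⟩ := Set.exists_max_image _ (‖f ·‖) hfin hne
      refine ⟨max (M / 2) ‖f i₀‖, max_lt (half_lt_self hM) (h i₀), fun i => ?_⟩
      by_cases hi : M / 2 ≤ ‖f i‖
      · exact le_max_of_le_right (hi₀ i hi)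
      · exact le_max_of_le_left (not_le.1 hi).le
  have hC₀ : 0 ≤ C := (norm_nonneg _).trans (hC (Classical.arbitrary ι))
  exact (norm_tsum_le_of_forall_le_of_nonneg hC₀ hC).trans_lt hCM

structure IsLastMax {α : Type*} [Preorder α] (t : ℕ → α) (N : ℕ) : Prop where
  le : ∀ m, t m ≤ t N
  lt_of_lt : ∀ m, N < m → t m < t N

theorem exists_isLastMax_of_tendsto_zero {t : ℕ → ℝ} (ht : Tendsto t atTop (𝓝 0)) {n₀ : ℕ}
    (h : 0 < t n₀) : ∃ N, IsLastMax t N := by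
  have hfin : {n | t n₀ ≤ t n}.Finite := by
    obtain ⟨J, hJ⟩ := eventually_atTop.1 (ht.eventually (gt_mem_nhds h))
    exact (Set.finite_Iio J).subset fun n hn => not_le.1 fun hJn => (hJ n hJn).not_ge hn
  obtain ⟨N₁, hN₁, hN₁max⟩ := Set.exists_max_image _ t hfin ⟨n₀, le_refl (t n₀)⟩
  have hmax : ∀ m, t m ≤ t N₁ := fun m =>
    (le_total (t n₀) (t m)).elim (hN₁max m) fun hm => hm.trans hN₁
  obtain ⟨N, hN, hNmax⟩ := Set.exists_max_image {n | t n = t N₁} id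
    (hfin.subset fun n hn => hN₁.trans hn.ge) ⟨N₁, rfl⟩
  refine ⟨N, fun m => hN ▸ hmax m, fun m hm => (hN ▸ hmax m).lt_of_ne fun hmN => ?_⟩
  exact (hNmax m (hmN.trans hN)).not_gt hm

section TopologicalRing

variable {R : Type*} [CommRing R] [TopologicalSpace R] [IsTopologicalRing R] [T2Space R]

theorem tsum_shift_mul_pow_eq_add_mul {a : ℕ → R} {z : R} {j : ℕ}
    (hs : Summable fun m => a (j + 1 + m) * z ^ m) :
    ∑' m, a (j + m) * z ^ m = a j + z * ∑' m, a (j + 1 + m) * z ^ m := by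
  have hterm : ∀ m, a (j + (m + 1)) * z ^ (m + 1) = z * (a (j + 1 + m) * z ^ m) := fun m => by
    rw [show j + (m + 1) = j + 1 + m by omega, pow_succ]; ring
  have hs₀ : Summable fun m => a (j + m) * z ^ m :=
    (summable_nat_add_iff 1).1 <| (hs.mul_left z).congr fun m => (hterm m).symm
  rw [hs₀.tsum_eq_zero_add, ← hs.tsum_mul_left, add_zero, pow_zero, mul_one]
  exact congrArg _ (tsum_congr hterm)

theorem tsum_mul_pow_eq_sub_mul_tsum {a b : ℕ → R} {z₀ z : R}
    (ha : Summable fun n => a n * z ^ n) (hb : Summable fun n => b n * z ^ n)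
    (h₀ : a 0 + z₀ * b 0 = 0) (hrec : ∀ n, b n = a (n + 1) + z₀ * b (n + 1)) :
    ∑' n, a n * z ^ n = (z - z₀) * ∑' n, b n * z ^ n := by
  have hsum : Summable fun n => (a n + z₀ * b n) * z ^ n :=
    (ha.add (hb.mul_left z₀)).congr fun n => by ring
  have key : ∑' n, a n * z ^ n + z₀ * ∑' n, b n * z ^ n = z * ∑' n, b n * z ^ n :=
    calc ∑' n, a n * z ^ n + z₀ * ∑' n, b n * z ^ n
        = ∑' n, (a n + z₀ * b n) * z ^ n := by
          rw [← hb.tsum_mul_left, ← ha.tsum_add (hb.mul_left z₀)]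
          exact tsum_congr fun n => by ring
      _ = ∑' n, z * (b n * z ^ n) := by
          rw [hsum.tsum_eq_zero_add, h₀, zero_mul, zero_add]
          exact tsum_congr fun n => by rw [← hrec, pow_succ]; ring
      _ = z * ∑' n, b n * z ^ n := hb.tsum_mul_left z
  linear_combination key

end TopologicalRing

namespace RestrictedSeries

variable {k : Type*} [NormedField k] {r : ℝ} {a : ℕ → k} {z : k}

def gaussTerm (r : ℝ) (a : ℕ → k) (n : ℕ) : ℝ := ‖a n‖ * r ^ n

theorem gaussTerm_nonneg (hr : 0 ≤ r) (a : ℕ → k) (n : ℕ) : 0 ≤ gaussTerm r a n := by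
  unfold gaussTerm; positivity

def IsWeierstrassFactorization (r : ℝ) (a : ℕ → k) (P : Polynomial k) (b : ℕ → k) : Prop :=
  Tendsto (gaussTerm r b) atTop (𝓝 0) ∧
    (∀ z : k, ‖z‖ ≤ r → ∑' n, b n * z ^ n ≠ 0) ∧
    (∀ z : k, ‖z‖ ≤ r → ∑' n, a n * z ^ n = P.eval z * ∑' n, b n * z ^ n) ∧
    ∀ z : k, P.IsRoot z ↔ ‖z‖ ≤ r ∧ ∑' n, a n * z ^ n = 0

theorem isWeierstrassFactorization_one (ha : Tendsto (gaussTerm r a) atTop (𝓝 0))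
    (hne : ∀ z : k, ‖z‖ ≤ r → ∑' n, a n * z ^ n ≠ 0) : IsWeierstrassFactorization r a 1 a :=
  ⟨ha, hne, fun z _ => by rw [Polynomial.eval_one, one_mul], fun z => by
    simpa using fun hz => hne z hz⟩

theorem IsWeierstrassFactorization.X_sub_C_mul {q b : ℕ → k} {P : Polynomial k} {z₀ : k}
    (h : IsWeierstrassFactorization r q P b) (hz₀ : ‖z₀‖ ≤ r)
    (hfac : ∀ z : k, ‖z‖ ≤ r → ∑' n, a n * z ^ n = (z - z₀) * ∑' n, q n * z ^ n) :
    IsWeierstrassFactorization r a ((Polynomial.X - Polynomial.C z₀) * P) b := by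
  obtain ⟨hb, hbne, hqP, hroots⟩ := h
  refine ⟨hb, hbne, fun z hz => by rw [hfac z hz, hqP z hz]; simp [mul_assoc], fun z => ?_⟩
  rw [Polynomial.root_mul, Polynomial.root_X_sub_C, hroots]
  constructor
  · rintro (rfl | ⟨hz, hq⟩)
    · exact ⟨hz₀, by simp [hfac z₀ hz₀]⟩
    · exact ⟨hz, by simp [hfac z hz, hq]⟩
  · rintro ⟨hz, hf⟩
    rw [hfac z hz, mul_eq_zero, sub_eq_zero] at hf
    exact hf.imp Eq.symm fun hq => ⟨hz, hq⟩

/-- The coefficients of `(f z - f z₀) / (z - z₀)`, where `f z = ∑ a n * z ^ n`. -/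
noncomputable def divCoeff (a : ℕ → k) (z₀ : k) (n : ℕ) : k := ∑' m, a (n + 1 + m) * z₀ ^ m

theorem gaussTerm_divCoeff_mul (z₀ : k) (n : ℕ) :
    gaussTerm r (divCoeff a z₀) n * r = ‖∑' m, a (n + 1 + m) * z₀ ^ m‖ * r ^ (n + 1) := by
  rw [gaussTerm, divCoeff, pow_succ, mul_assoc]

theorem norm_mul_pow_mul_pow_le (hz : ‖z‖ ≤ r) (j m : ℕ) :
    ‖a (j + m) * z ^ m‖ * r ^ j ≤ gaussTerm r a (j + m) := by
  have hr : 0 ≤ r := (norm_nonneg z).trans hz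
  calc ‖a (j + m) * z ^ m‖ * r ^ j ≤ ‖a (j + m)‖ * r ^ m * r ^ j := by
        rw [norm_mul, norm_pow]; gcongr
    _ = gaussTerm r a (j + m) := by rw [gaussTerm, pow_add]; ring

theorem tendsto_gaussTerm_shift (hr : 0 < r) (ha : Tendsto (gaussTerm r a) atTop (𝓝 0))
    (j : ℕ) : Tendsto (gaussTerm r fun m => a (j + m)) atTop (𝓝 0) := by
  have := ((tendsto_add_atTop_iff_nat j).2 ha).div_const (r ^ j)
  rw [zero_div] at this
  refine this.congr fun m => ?_
  rw [gaussTerm, gaussTerm, add_comm m j, pow_add, mul_comm (r ^ j), ← mul_assoc,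
    mul_div_cancel_right₀ _ (pow_ne_zero j hr.ne')]

variable [IsUltrametricDist k]

theorem norm_tsum_shift_mul_pow_le (hr : 0 < r) (hz : ‖z‖ ≤ r) {j : ℕ} {C : ℝ} (hC : 0 ≤ C)
    (h : ∀ m, j ≤ m → gaussTerm r a m ≤ C) : ‖∑' m, a (j + m) * z ^ m‖ * r ^ j ≤ C := by
  rw [← le_div_iff₀ (pow_pos hr j)]
  refine IsUltrametricDist.norm_tsum_le_of_forall_le_of_nonneg (by positivity) fun m => ?_
  rw [le_div_iff₀ (pow_pos hr j)]
  exact (norm_mul_pow_mul_pow_le hz j m).trans (h _ (Nat.le_add_right j m))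

theorem norm_tsum_shift_mul_pow_lt (hr : 0 < r) (hz : ‖z‖ ≤ r) {j : ℕ} {C : ℝ}
    (h : ∀ m, j ≤ m → gaussTerm r a m < C) : ‖∑' m, a (j + m) * z ^ m‖ * r ^ j < C := by
  rw [← lt_div_iff₀ (pow_pos hr j)]
  refine IsUltrametricDist.norm_tsum_lt_of_forall_lt_s16 fun m => ?_
  rw [lt_div_iff₀ (pow_pos hr j)]
  exact (norm_mul_pow_mul_pow_le hz j m).trans_lt (h _ (Nat.le_add_right j m))

theorem tendsto_gaussTerm_divCoeff (hr : 0 < r) (ha : Tendsto (gaussTerm r a) atTop (𝓝 0))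
    {z₀ : k} (hz₀ : ‖z₀‖ ≤ r) : Tendsto (gaussTerm r (divCoeff a z₀)) atTop (𝓝 0) := by
  refine tendsto_order.2
    ⟨fun ε hε => .of_forall fun n => hε.trans_le (gaussTerm_nonneg hr.le _ n), fun ε hε => ?_⟩
  obtain ⟨J, hJ⟩ := eventually_atTop.1 (ha.eventually (gt_mem_nhds (mul_pos hε hr)))
  refine eventually_atTop.2 ⟨J, fun n hn => lt_of_mul_lt_mul_right ?_ hr.le⟩
  rw [gaussTerm_divCoeff_mul]
  exact norm_tsum_shift_mul_pow_lt hr hz₀ fun m hm => hJ m (by omega)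

variable [CompleteSpace k]

theorem summable_mul_pow (ha : Tendsto (gaussTerm r a) atTop (𝓝 0)) (hz : ‖z‖ ≤ r) :
    Summable fun n => a n * z ^ n := by
  refine NonarchimedeanAddGroup.summable_of_tendsto_cofinite_zero ?_
  rw [Nat.cofinite_eq_atTop]
  exact squeeze_zero_norm
    (fun n => by simpa using norm_mul_pow_mul_pow_le (a := a) hz 0 n) ha

theorem tsum_shift_mul_pow_eq_add (hr : 0 < r) (ha : Tendsto (gaussTerm r a) atTop (𝓝 0))
    (hz : ‖z‖ ≤ r) (j : ℕ) :
    ∑' m, a (j + m) * z ^ m = a j + z * ∑' m, a (j + 1 + m) * z ^ m :=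
  tsum_shift_mul_pow_eq_add_mul (summable_mul_pow (tendsto_gaussTerm_shift hr ha (j + 1)) hz)

theorem norm_tsum_shift_mul_pow_eq (hr : 0 < r) (ha : Tendsto (gaussTerm r a) atTop (𝓝 0))
    (hz : ‖z‖ ≤ r) {j : ℕ} (h : ∀ m, j < m → gaussTerm r a m < gaussTerm r a j) :
    ‖∑' m, a (j + m) * z ^ m‖ = ‖a j‖ := by
  set S := ∑' m, a (j + 1 + m) * z ^ m
  have htail : ‖z * S‖ * r ^ j < ‖a j‖ * r ^ j :=
    calc ‖z * S‖ * r ^ j = ‖z‖ * (‖S‖ * r ^ j) := by rw [norm_mul]; ring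
      _ ≤ r * (‖S‖ * r ^ j) := by gcongr
      _ = ‖S‖ * r ^ (j + 1) := by ring
      _ < ‖a j‖ * r ^ j := norm_tsum_shift_mul_pow_lt hr hz h
  have htail' := lt_of_mul_lt_mul_right htail (pow_nonneg hr.le j)
  rw [tsum_shift_mul_pow_eq_add hr ha hz, IsUltrametricDist.norm_add_eq_max_of_norm_ne_norm
    htail'.ne', max_eq_left htail'.le]

theorem tsum_mul_pow_ne_zero_of_isLastMax_zero (hr : 0 < r)
    (ha : Tendsto (gaussTerm r a) atTop (𝓝 0)) (hmax : IsLastMax (gaussTerm r a) 0)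
    (hz : ‖z‖ ≤ r) : ∑' n, a n * z ^ n ≠ 0 := by
  have hnorm := norm_tsum_shift_mul_pow_eq hr ha hz hmax.lt_of_lt
  have hpos : 0 < gaussTerm r a 0 :=
    (gaussTerm_nonneg hr.le a 1).trans_lt (hmax.lt_of_lt 1 one_pos)
  simp only [zero_add] at hnorm
  rw [gaussTerm, pow_zero, mul_one] at hpos
  rwa [← norm_pos_iff, hnorm]

theorem isLastMax_divCoeff (hr : 0 < r) (ha : Tendsto (gaussTerm r a) atTop (𝓝 0))
    {z₀ : k} (hz₀ : ‖z₀‖ ≤ r) {N : ℕ} (hmax : IsLastMax (gaussTerm r a) (N + 1)) :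
    IsLastMax (gaussTerm r (divCoeff a z₀)) N := by
  have hN : gaussTerm r (divCoeff a z₀) N * r = gaussTerm r a (N + 1) := by
    rw [gaussTerm_divCoeff_mul, norm_tsum_shift_mul_pow_eq hr ha hz₀ hmax.lt_of_lt,
      gaussTerm]
  refine ⟨fun n => le_of_mul_le_mul_right ?_ hr, fun n hn => lt_of_mul_lt_mul_right ?_ hr.le⟩
  · rw [hN, gaussTerm_divCoeff_mul]
    exact norm_tsum_shift_mul_pow_le hr hz₀ (gaussTerm_nonneg hr.le a _) fun m _ => hmax.le m
  · rw [hN, gaussTerm_divCoeff_mul]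
    exact norm_tsum_shift_mul_pow_lt hr hz₀ fun m hm => hmax.lt_of_lt m (by omega)

theorem tsum_mul_pow_eq_sub_mul_tsum_divCoeff (hr : 0 < r)
    (ha : Tendsto (gaussTerm r a) atTop (𝓝 0)) {z₀ : k} (hz₀ : ‖z₀‖ ≤ r)
    (hf : ∑' n, a n * z₀ ^ n = 0) (hz : ‖z‖ ≤ r) :
    ∑' n, a n * z ^ n = (z - z₀) * ∑' n, divCoeff a z₀ n * z ^ n := by
  refine tsum_mul_pow_eq_sub_mul_tsum (summable_mul_pow ha hz)
    (summable_mul_pow (tendsto_gaussTerm_divCoeff hr ha hz₀) hz) ?_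
    fun n => tsum_shift_mul_pow_eq_add hr ha hz₀ (n + 1)
  rw [← hf]
  simpa [divCoeff] using (tsum_shift_mul_pow_eq_add hr ha hz₀ 0).symm

theorem exists_isWeierstrassFactorization (hr : 0 < r) {N : ℕ}
    (ha : Tendsto (gaussTerm r a) atTop (𝓝 0)) (hmax : IsLastMax (gaussTerm r a) N) :
    ∃ P b, IsWeierstrassFactorization r a P b := by
  induction N generalizing a with
  | zero => exact ⟨1, a, isWeierstrassFactorization_one ha fun z hz =>
      tsum_mul_pow_ne_zero_of_isLastMax_zero hr ha hmax hz⟩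
  | succ N ih =>
    by_cases hzero : ∃ z₀ : k, ‖z₀‖ ≤ r ∧ ∑' n, a n * z₀ ^ n = 0
    · obtain ⟨z₀, hz₀, hf⟩ := hzero
      obtain ⟨P, b, h⟩ :=
        ih (tendsto_gaussTerm_divCoeff hr ha hz₀) (isLastMax_divCoeff hr ha hz₀ hmax)
      exact ⟨_, b, h.X_sub_C_mul hz₀ fun z hz =>
        tsum_mul_pow_eq_sub_mul_tsum_divCoeff hr ha hz₀ hf hz⟩
    · push Not at hzero
      exact ⟨1, a, isWeierstrassFactorization_one ha hzero⟩

end RestrictedSeries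

theorem weierstrass_factorization_general
    (k : Type*) [NontriviallyNormedField k] [CompleteSpace k]
    [IsUltrametricDist k]
    (a : ℕ → k) (c : k) (hc : c ≠ 0) (r : ℝ) (hr : r = ‖c‖)
    (hdecay : Tendsto (fun n => ‖a n‖ * r ^ n) atTop (nhds 0))
    (hne : ∃ n, a n ≠ 0) :
    ∃ (P : Polynomial k) (b : ℕ → k),
      Tendsto (fun n => ‖b n‖ * r ^ n) atTop (nhds 0) ∧
      (∀ z : k, ‖z‖ ≤ r → ∑' n : ℕ, b n * z ^ n ≠ 0) ∧
      (∀ z : k, ‖z‖ ≤ r →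
        ∑' n : ℕ, a n * z ^ n = P.eval z * ∑' n : ℕ, b n * z ^ n) ∧
      (∀ z : k, P.IsRoot z ↔ (‖z‖ ≤ r ∧ ∑' n : ℕ, a n * z ^ n = 0)) := by
  have hr₀ : 0 < r := hr ▸ norm_pos_iff.mpr hc
  obtain ⟨n₀, hn₀⟩ := hne
  obtain ⟨N, hN⟩ := exists_isLastMax_of_tendsto_zero hdecay
    (show 0 < ‖a n₀‖ * r ^ n₀ by positivity)
  exact RestrictedSeries.exists_isWeierstrassFactorization hr₀ hdecay hN

/-- Weierstrass factorization on a non-Archimedean disc: a not-identically-zero power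
series convergent on the closed disc of radius `r ∈ |k*|` with finitely many zeros
there factors as `f = P · u`, where `P` is a polynomial whose roots are exactly the
zeros of `f` in the disc and `u` is a convergent power series with no zeros in the
disc. -/
theorem weierstrass_factorization
    (k : Type*) [NontriviallyNormedField k] [IsAlgClosed k] [CompleteSpace k]
    [IsUltrametricDist k]
    (a : ℕ → k) (c : k) (hc : c ≠ 0) (r : ℝ) (hr : r = ‖c‖)
    (hdecay : Tendsto (fun n => ‖a n‖ * r ^ n) atTop (nhds 0))
    (hne : ∃ n, a n ≠ 0)
    (hfin : {z : k | ‖z‖ ≤ r ∧ ∑' n : ℕ, a n * z ^ n = 0}.Finite) :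
    ∃ (P : Polynomial k) (b : ℕ → k),
      Tendsto (fun n => ‖b n‖ * r ^ n) atTop (nhds 0) ∧
      (∀ z : k, ‖z‖ ≤ r → ∑' n : ℕ, b n * z ^ n ≠ 0) ∧
      (∀ z : k, ‖z‖ ≤ r →
        ∑' n : ℕ, a n * z ^ n = P.eval z * ∑' n : ℕ, b n * z ^ n) ∧
      (∀ z : k, P.IsRoot z ↔ (‖z‖ ≤ r ∧ ∑' n : ℕ, a n * z ^ n = 0)) :=
  weierstrass_factorization_general k a c hc r hr hdecay hne
end

section
/- Let k be an algebraically closed complete non-Archimedean valued field, r ∈ |k*|, and f a power series convergent on the closed disc D(r). The number of zeros of f in D(r), counted with multiplicity, is finite and equals the largest index N such that |a_N| r^N = sup_n |aₙ| rⁿ. -/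
/-!
Let `N` be the largest index maximising `‖aₙ‖ rⁿ`. The index at which the weighted coefficients
of a product are last maximal is the sum of those of the factors (a form of Gauss's lemma). Since
`X - w` has this index `1` or `0` according as `‖w‖ ≤ r` or not, a polynomial `Q` with index `N`
has exactly `N` roots in the closed disc, and `‖Q(z)‖ ≥ ‖a_N‖ ‖z - w‖ ^ N` for the nearest of them.
For `N ≥ 1` this lets us choose roots of successive truncations of `f`, each close to the previous
one; they converge to a zero `w` of `f` in the disc. Then `f = (X - w) g` where `g` has index
`N - 1`, and induction on `N` gives `f = P u` with `P` monic of degree `N` with its roots in the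
disc, and `u` of index `0`, so `‖u(z)‖ = ‖u₀‖ ≠ 0` on the disc.
-/

open Filter Topology PowerSeries Finset.HasAntidiagonal
open scoped Polynomial

namespace NewtonPolygon

section Ultrametric

variable {E ι : Type*} [SeminormedAddCommGroup E] [IsUltrametricDist E]

lemma norm_sum_mul_le {s : Finset ι} {f : ι → E} {t C : ℝ} (ht : 0 < t) (hC : 0 ≤ C)
    (h : ∀ i ∈ s, ‖f i‖ * t ≤ C) : ‖∑ i ∈ s, f i‖ * t ≤ C := by
  rw [← le_div_iff₀ ht]
  exact IsUltrametricDist.norm_sum_le_of_forall_le_of_nonneg (by positivity)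
    fun i hi => (le_div_iff₀ ht).2 (h i hi)

lemma norm_sum_mul_lt {s : Finset ι} {f : ι → E} {t C : ℝ} (ht : 0 < t) (hC : 0 < C)
    (h : ∀ i ∈ s, ‖f i‖ * t < C) : ‖∑ i ∈ s, f i‖ * t < C := by
  rcases s.eq_empty_or_nonempty with rfl | hs
  · simpa using hC
  rw [← lt_div_iff₀ ht]
  exact (hs.norm_sum_le_sup'_norm f).trans_lt
    ((Finset.sup'_lt_iff hs).2 fun i hi => (lt_div_iff₀ ht).2 (h i hi))

lemma norm_add_eq_left_of_norm_lt {x y : E} (h : ‖y‖ < ‖x‖) : ‖x + y‖ = ‖x‖ := by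
  rw [IsUltrametricDist.norm_add_eq_max_of_norm_ne_norm h.ne', max_eq_left h.le]

lemma norm_sub_eq_of_norm_lt {x y : E} (h : ‖x‖ < ‖y‖) : ‖x - y‖ = ‖y‖ := by
  rw [sub_eq_neg_add, norm_add_eq_left_of_norm_lt (by rwa [norm_neg]), norm_neg]

end Ultrametric

lemma tendsto_of_tendsto_pow {α : Type*} {l : Filter α} {u : α → ℝ} {N : ℕ} (hu : ∀ i, 0 ≤ u i)
    (hN : N ≠ 0) (h : Tendsto (fun i => u i ^ N) l (𝓝 0)) : Tendsto u l (𝓝 0) := by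
  have := h.rpow_const (p := (N : ℝ)⁻¹) (Or.inr (by positivity))
  simpa [Real.pow_rpow_inv_natCast (hu _) hN, Real.zero_rpow (by positivity : (N : ℝ)⁻¹ ≠ 0)]
    using this

variable {k : Type*} [NormedField k] {r : ℝ}

lemma norm_mul_pow_le {a z : k} (hz : ‖z‖ ≤ r) (n : ℕ) : ‖a * z ^ n‖ ≤ ‖a‖ * r ^ n := by
  rw [norm_mul, norm_pow]
  gcongr

lemma norm_multiset_prod (s : Multiset k) : ‖s.prod‖ = (s.map norm).prod :=
  map_multiset_prod normHom s

structure IsDominantIndex (r : ℝ) (φ : k⟦X⟧) (N : ℕ) : Prop where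
  le : ∀ n, ‖coeff n φ‖ * r ^ n ≤ ‖coeff N φ‖ * r ^ N
  lt : ∀ n, N < n → ‖coeff n φ‖ * r ^ n < ‖coeff N φ‖ * r ^ N

namespace IsDominantIndex

variable {φ ψ : k⟦X⟧} {N ν μ : ℕ}

lemma coeff_ne_zero (hr : 0 ≤ r) (h : IsDominantIndex r φ N) : coeff N φ ≠ 0 := by
  intro h0
  have := h.lt (N + 1) N.lt_succ_self
  rw [h0, norm_zero, zero_mul] at this
  exact this.not_ge (by positivity)

lemma ne_zero (hr : 0 ≤ r) (h : IsDominantIndex r φ N) : φ ≠ 0 := by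
  rintro rfl
  exact h.coeff_ne_zero hr (by simp)

lemma unique (hν : IsDominantIndex r φ ν) (hμ : IsDominantIndex r φ μ) : ν = μ := by
  rcases lt_trichotomy ν μ with h | h | h
  · exact absurd (hν.lt μ h) (hμ.le ν).not_gt
  · exact h
  · exact absurd (hμ.lt ν h) (hν.le μ).not_gt

lemma of_norm_coeff_le (h : IsDominantIndex r φ N) (hr : 0 ≤ r) (hN : coeff N ψ = coeff N φ)
    (hle : ∀ n, ‖coeff n ψ‖ ≤ ‖coeff n φ‖) : IsDominantIndex r ψ N where
  le n := hN ▸ (mul_le_mul_of_nonneg_right (hle n) (by positivity)).trans (h.le n)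
  lt n hn := hN ▸ (mul_le_mul_of_nonneg_right (hle n) (by positivity)).trans_lt (h.lt n hn)

lemma trunc {m : ℕ} (hr : 0 ≤ r) (h : IsDominantIndex r φ N)
    (hm : N < m) : IsDominantIndex r (PowerSeries.trunc m φ : k⟦X⟧) N :=
  h.of_norm_coeff_le hr (by simp [coeff_trunc, hm]) fun n => by
    rw [Polynomial.coeff_coe, coeff_trunc]
    split_ifs <;> simp

lemma norm_coeff_mul_mul_pow_lt (hr : 0 < r) (hφ : IsDominantIndex r φ ν)
    (hψ : IsDominantIndex r ψ μ) {n : ℕ} {p : ℕ × ℕ} (hp : p ∈ antidiagonal n)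
    (hνμ : ν < p.1 ∨ μ < p.2) :
    ‖coeff p.1 φ * coeff p.2 ψ‖ * r ^ n < (‖coeff ν φ‖ * r ^ ν) * (‖coeff μ ψ‖ * r ^ μ) := by
  have hφ0 : 0 < ‖coeff ν φ‖ * r ^ ν := by
    have := norm_pos_iff.2 (hφ.coeff_ne_zero hr.le); positivity
  have hψ0 : 0 < ‖coeff μ ψ‖ * r ^ μ := by
    have := norm_pos_iff.2 (hψ.coeff_ne_zero hr.le); positivity
  rw [← mem_antidiagonal.1 hp, norm_mul, pow_add, mul_mul_mul_comm]
  rcases hνμ with h | h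
  · exact mul_lt_mul_of_lt_of_le_of_nonneg_of_pos (hφ.lt _ h) (hψ.le _) (by positivity) hψ0
  · exact mul_lt_mul' (hφ.le _) (hψ.lt _ h) (by positivity) hφ0

variable [IsUltrametricDist k]

lemma norm_coeff_mul (hr : 0 < r) (hφ : IsDominantIndex r φ ν) (hψ : IsDominantIndex r ψ μ) :
    ‖coeff (ν + μ) (φ * ψ)‖ = ‖coeff ν φ‖ * ‖coeff μ ψ‖ := by
  have hmem : (ν, μ) ∈ antidiagonal (ν + μ) := mem_antidiagonal.2 rfl
  have hrest : ‖∑ p ∈ (antidiagonal (ν + μ)).erase (ν, μ), coeff p.1 φ * coeff p.2 ψ‖ *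
      r ^ (ν + μ) < ‖coeff ν φ * coeff μ ψ‖ * r ^ (ν + μ) := by
    have hmain : ‖coeff ν φ * coeff μ ψ‖ * r ^ (ν + μ) =
        (‖coeff ν φ‖ * r ^ ν) * (‖coeff μ ψ‖ * r ^ μ) := by
      rw [norm_mul, pow_add]; ring
    refine norm_sum_mul_lt (by positivity) ?_ fun p hp => ?_
    · rw [norm_mul]
      have := norm_pos_iff.2 (hφ.coeff_ne_zero hr.le)
      have := norm_pos_iff.2 (hψ.coeff_ne_zero hr.le)
      positivity
    obtain ⟨hne, hp⟩ := Finset.mem_erase.1 hp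
    refine hmain ▸ norm_coeff_mul_mul_pow_lt hr hφ hψ hp ?_
    have := mem_antidiagonal.1 hp
    by_contra! h
    exact hne (Prod.ext (by omega) (by omega))
  rw [coeff_mul, ← Finset.add_sum_erase _ _ hmem,
    norm_add_eq_left_of_norm_lt (lt_of_mul_lt_mul_right hrest (by positivity)), norm_mul]

theorem mul (hr : 0 < r) (hφ : IsDominantIndex r φ ν) (hψ : IsDominantIndex r ψ μ) :
    IsDominantIndex r (φ * ψ) (ν + μ) := by
  have hmax : ‖coeff (ν + μ) (φ * ψ)‖ * r ^ (ν + μ) =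
      (‖coeff ν φ‖ * r ^ ν) * (‖coeff μ ψ‖ * r ^ μ) := by
    rw [norm_coeff_mul hr hφ hψ, pow_add]; ring
  have hpos : 0 < (‖coeff ν φ‖ * r ^ ν) * (‖coeff μ ψ‖ * r ^ μ) := by
    have := norm_pos_iff.2 (hφ.coeff_ne_zero hr.le)
    have := norm_pos_iff.2 (hψ.coeff_ne_zero hr.le)
    positivity
  refine ⟨fun n => ?_, fun n hn => ?_⟩ <;> rw [hmax, coeff_mul]
  · refine norm_sum_mul_le (by positivity) hpos.le fun p hp => ?_
    rw [← mem_antidiagonal.1 hp, norm_mul, pow_add, mul_mul_mul_comm]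
    exact mul_le_mul (hφ.le _) (hψ.le _) (by positivity) (by positivity)
  · refine norm_sum_mul_lt (by positivity) hpos fun p hp => ?_
    refine norm_coeff_mul_mul_pow_lt hr hφ hψ hp ?_
    have := mem_antidiagonal.1 hp
    omega

end IsDominantIndex

lemma exists_isDominantIndex {φ : k⟦X⟧} (hr : 0 < r) (hφ : IsRestricted r φ) (h0 : φ ≠ 0) :
    ∃ N, IsDominantIndex r φ N := by
  set u : ℕ → ℝ := fun n => ‖coeff n φ‖ * r ^ n
  obtain ⟨n₀, hn₀⟩ : ∃ n, coeff n φ ≠ 0 := by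
    by_contra! h
    exact h0 (PowerSeries.ext h)
  have hu₀ : 0 < u n₀ := by have := norm_pos_iff.2 hn₀; positivity
  obtain ⟨M, hM⟩ :=
    eventually_atTop.1 ((isRestricted_iff' r φ).1 hφ |>.eventually (gt_mem_nhds hu₀))
  have hn₀M : n₀ ∈ Finset.range M :=
    Finset.mem_range.2 (by_contra fun h => (hM n₀ (not_lt.1 h)).false)
  obtain ⟨n₁, hn₁M, hn₁⟩ := (Finset.range M).exists_max_image u ⟨n₀, hn₀M⟩
  have hmax : ∀ n, u n ≤ u n₁ := fun n => by
    by_cases hn : n < M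
    · exact hn₁ n (Finset.mem_range.2 hn)
    · exact ((hM n (not_lt.1 hn)).trans_le (hn₁ n₀ hn₀M)).le
  set S := (Finset.range M).filter (u · = u n₁)
  have hS : n₁ ∈ S := Finset.mem_filter.2 ⟨hn₁M, rfl⟩
  have hN : u (S.max' ⟨n₁, hS⟩) = u n₁ := (Finset.mem_filter.1 (S.max'_mem _)).2
  refine ⟨S.max' ⟨n₁, hS⟩, fun n => (hmax n).trans_eq hN.symm, fun n hn => ?_⟩
  change u n < u _
  rw [hN]
  by_cases hnM : n < M
  · refine (hmax n).lt_of_ne fun h => ?_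
    exact hn.not_ge (S.le_max' n (Finset.mem_filter.2 ⟨Finset.mem_range.2 hnM, h⟩))
  · exact (hM n (not_lt.1 hnM)).trans_le (hn₁ n₀ hn₀M)

section XSubC

variable {w c : k}

lemma isDominantIndex_C (hc : c ≠ 0) : IsDominantIndex r (C c) 0 := by
  refine ⟨fun n => ?_, fun n hn => ?_⟩ <;> rcases n with _ | n <;> simp_all [coeff_C]

lemma isDominantIndex_X_sub_C_of_norm_le (hr : 0 < r) (hw : ‖w‖ ≤ r) :
    IsDominantIndex r (X - C w) 1 := by
  refine ⟨fun n => ?_, fun n hn => ?_⟩ <;> rcases n with _ | _ | n <;> simp_all [coeff_X, hr.le]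

lemma isDominantIndex_X_sub_C_of_lt_norm (hr : 0 ≤ r) (hw : r < ‖w‖) :
    IsDominantIndex r (X - C w) 0 := by
  have hw0 : w ≠ 0 := norm_pos_iff.1 (hr.trans_lt hw)
  refine ⟨fun n => ?_, fun n hn => ?_⟩ <;> rcases n with _ | _ | n <;> simp_all [coeff_X, hw.le]

variable [IsUltrametricDist k]

lemma IsDominantIndex.of_X_sub_C_mul {ψ : k⟦X⟧} {N : ℕ} (hr : 0 < r) (hψ : IsRestricted r ψ)
    (hw : ‖w‖ ≤ r) (h : IsDominantIndex r ((X - C w) * ψ) N) :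
    IsDominantIndex r ψ (N - 1) := by
  obtain ⟨μ, hμ⟩ := exists_isDominantIndex hr hψ (right_ne_zero_of_mul (h.ne_zero hr.le))
  obtain rfl := ((isDominantIndex_X_sub_C_of_norm_le hr hw).mul hr hμ).unique h
  simpa using hμ

lemma isDominantIndex_C_mul_prod_X_sub_C (hr : 0 < r) (hc : c ≠ 0) (s : Multiset k) :
    IsDominantIndex r (C c * (s.map fun w => X - C w).prod) (s.filter (‖·‖ ≤ r)).card ∧
      ‖coeff (s.filter (‖·‖ ≤ r)).card (C c * (s.map fun w => X - C w).prod)‖ =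
        ‖c‖ * ((s.filter (r < ‖·‖)).map norm).prod := by
  induction s using Multiset.induction with
  | empty => simpa using isDominantIndex_C hc
  | cons w s ih =>
    obtain ⟨hdom, hnorm⟩ := ih
    rw [Multiset.map_cons, Multiset.prod_cons, mul_left_comm]
    by_cases hw : ‖w‖ ≤ r
    · have hX := isDominantIndex_X_sub_C_of_norm_le hr hw
      rw [Multiset.filter_cons_of_pos (p := (‖·‖ ≤ r)) s hw,
        Multiset.filter_cons_of_neg (p := (r < ‖·‖)) s hw.not_gt,
        Multiset.card_cons, add_comm]
      refine ⟨hX.mul hr hdom, ?_⟩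
      rw [hX.norm_coeff_mul hr hdom, hnorm]
      simp
    · have hX := isDominantIndex_X_sub_C_of_lt_norm hr.le (not_le.1 hw)
      rw [Multiset.filter_cons_of_neg (p := (‖·‖ ≤ r)) s hw,
        Multiset.filter_cons_of_pos (p := (r < ‖·‖)) s (not_le.1 hw),
        ← zero_add (Multiset.card _)]
      refine ⟨hX.mul hr hdom, ?_⟩
      rw [hX.norm_coeff_mul hr hdom, hnorm]
      simp [mul_left_comm]

end XSubC

section Roots

variable [IsAlgClosed k]

lemma coe_eq_C_mul_prod_X_sub_C (Q : k[X]) :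
    (Q : k⟦X⟧) = C Q.leadingCoeff * (Q.roots.map fun w => X - C w).prod := by
  conv_lhs => rw [← Polynomial.C_leadingCoeff_mul_prod_multiset_X_sub_C
    (Polynomial.splits_iff_card_roots.1 (IsAlgClosed.splits Q))]
  have := map_multiset_prod Polynomial.coeToPowerSeries.ringHom
    (Q.roots.map fun w => Polynomial.X - Polynomial.C w)
  simp_all [Multiset.map_map, Function.comp_def]

variable [IsUltrametricDist k] {φ : k⟦X⟧} {Q : k[X]} {N : ℕ}

namespace IsDominantIndex

lemma card_filter_roots (hr : 0 < r) (hQ : IsDominantIndex r (Q : k⟦X⟧) N) :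
    (Q.roots.filter (‖·‖ ≤ r)).card = N := by
  have hQ0 : Q ≠ 0 := fun h => hQ.ne_zero hr.le (by simp [h])
  have := (isDominantIndex_C_mul_prod_X_sub_C hr (Polynomial.leadingCoeff_ne_zero.2 hQ0) Q.roots).1
  rw [← coe_eq_C_mul_prod_X_sub_C] at this
  exact this.unique hQ

lemma norm_coeff_eq (hr : 0 < r) (hQ : IsDominantIndex r (Q : k⟦X⟧) N) :
    ‖Q.coeff N‖ = ‖Q.leadingCoeff‖ * ((Q.roots.filter (r < ‖·‖)).map norm).prod := by
  have hQ0 : Q ≠ 0 := fun h => hQ.ne_zero hr.le (by simp [h])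
  have := (isDominantIndex_C_mul_prod_X_sub_C hr (Polynomial.leadingCoeff_ne_zero.2 hQ0) Q.roots).2
  rwa [← coe_eq_C_mul_prod_X_sub_C, hQ.card_filter_roots hr, Polynomial.coeff_coe] at this

lemma norm_eval (hr : 0 < r) (hQ : IsDominantIndex r (Q : k⟦X⟧) N) {z : k} (hz : ‖z‖ ≤ r) :
    ‖Q.eval z‖ = ‖Q.coeff N‖ * ((Q.roots.filter (‖·‖ ≤ r)).map fun w => ‖z - w‖).prod := by
  have hout : (Q.roots.filter fun w => ¬‖w‖ ≤ r).map (fun w => ‖z - w‖) =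
      (Q.roots.filter (r < ‖·‖)).map norm := by
    rw [Multiset.filter_congr fun w _ => not_le]
    exact Multiset.map_congr rfl fun w hw =>
      norm_sub_eq_of_norm_lt (hz.trans_lt (Multiset.mem_filter.1 hw).2)
  rw [hQ.norm_coeff_eq hr, (IsAlgClosed.splits Q).eval_eq_prod_roots, norm_mul, norm_multiset_prod,
    Multiset.map_map]
  conv_lhs => rw [← Multiset.filter_add_not (‖·‖ ≤ r) Q.roots, Multiset.map_add, Multiset.prod_add]
  rw [Function.comp_def, hout]
  ring

lemma exists_root_norm_sub_pow_mul_le (hr : 0 < r) (hQ : IsDominantIndex r (Q : k⟦X⟧) N)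
    (hN : N ≠ 0) {z : k} (hz : ‖z‖ ≤ r) :
    ∃ w, ‖w‖ ≤ r ∧ Q.IsRoot w ∧ ‖z - w‖ ^ N * ‖Q.coeff N‖ ≤ ‖Q.eval z‖ := by
  set s := Q.roots.filter (‖·‖ ≤ r)
  have hcard : s.card = N := hQ.card_filter_roots hr
  obtain ⟨w, hws, hmin⟩ := Multiset.exists_min_image (fun w => ‖z - w‖)
    (Multiset.card_pos.1 (hcard ▸ Nat.pos_of_ne_zero hN))
  obtain ⟨hwQ, hwr⟩ := Multiset.mem_filter.1 hws
  refine ⟨w, hwr, (Polynomial.mem_roots'.1 hwQ).2, ?_⟩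
  rw [hQ.norm_eval hr hz, mul_comm, ← hcard, ← Multiset.prod_replicate, ← Multiset.map_const']
  gcongr
  exact Multiset.prod_map_le_prod_map₀ _ _ (fun _ _ => norm_nonneg _) hmin

end IsDominantIndex

lemma exists_seq_isRoot_trunc (hr : 0 < r) (hN : IsDominantIndex r φ N) (hN0 : N ≠ 0) :
    ∃ x : ℕ → k, ∀ i, ‖x i‖ ≤ r ∧ (trunc (N + 1 + i) φ).IsRoot (x i) ∧
      ‖x (i + 1) - x i‖ ^ N * ‖coeff N φ‖ ≤ ‖coeff (N + 1 + i) φ‖ * r ^ (N + 1 + i) := by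
  have step : ∀ i z, ‖z‖ ≤ r → ∃ w, ‖w‖ ≤ r ∧ (trunc (N + 1 + i) φ).IsRoot w ∧
      ‖z - w‖ ^ N * ‖coeff N φ‖ ≤ ‖(trunc (N + 1 + i) φ).eval z‖ := fun i z hz => by
    simpa [coeff_trunc, show N < N + 1 + i by omega] using
      (hN.trunc hr.le (by omega : N < N + 1 + i)).exists_root_norm_sub_pow_mul_le hr hN0 hz
  choose! g hg using step
  -- `x (i + 1)` is a root of the next truncation nearest to `x i`.
  let x : ℕ → k := fun i => Nat.rec (g 0 0) (fun i y => g (i + 1) y) i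
  have hx : ∀ i, ‖x i‖ ≤ r ∧ (trunc (N + 1 + i) φ).IsRoot (x i) := by
    intro i
    induction i with
    | zero => exact (hg 0 0 (by simpa using hr.le)).imp_right And.left
    | succ i ih => exact (hg (i + 1) (x i) ih.1).imp_right And.left
  refine ⟨x, fun i => ⟨(hx i).1, (hx i).2, ?_⟩⟩
  have heval :
      (trunc (N + 1 + (i + 1)) φ).eval (x i) = coeff (N + 1 + i) φ * x i ^ (N + 1 + i) := by
    rw [← add_assoc, trunc_succ, Polynomial.eval_add, (hx i).2.eq_zero, zero_add,
      Polynomial.eval_monomial]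
  rw [norm_sub_rev]
  exact (hg (i + 1) (x i) (hx i).1).2.2.trans (heval ▸ norm_mul_pow_le (hx i).1 _)

end Roots

noncomputable def tsumEval (φ : k⟦X⟧) (z : k) : k := ∑' n, coeff n φ * z ^ n

lemma isRestricted_coe (P : k[X]) : IsRestricted r (P : k⟦X⟧) :=
  (isRestricted_iff' r _).2 (tendsto_const_nhds.congr' ((eventually_gt_atTop P.natDegree).mono
    fun n hn => by simp [Polynomial.coeff_coe, Polynomial.coeff_eq_zero_of_natDegree_lt hn]))

lemma tsumEval_coe (P : k[X]) (z : k) : tsumEval (P : k⟦X⟧) z = P.eval z := by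
  rw [tsumEval, tsum_eq_sum (s := Finset.range (P.natDegree + 1)) fun n hn => ?_,
    Polynomial.eval_eq_sum_range]
  · simp [Polynomial.coeff_coe]
  · rw [Polynomial.coeff_coe, Polynomial.coeff_eq_zero_of_natDegree_lt, zero_mul]
    simpa using hn

section Series

variable [IsUltrametricDist k] {φ ψ : k⟦X⟧} {w z : k}

/-- The quotient `(φ - φ(w)) / (X - w)`, see `eq_C_add_X_sub_C_mul_divXSubC`. -/
noncomputable def divXSubC (φ : k⟦X⟧) (w : k) : k⟦X⟧ :=
  mk fun i => ∑' j, coeff (i + 1 + j) φ * w ^ j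

lemma norm_coeff_divXSubC_mul_pow_le (hr : 0 < r) (hw : ‖w‖ ≤ r) {B : ℝ} (hB : 0 ≤ B) {i : ℕ}
    (h : ∀ n, i < n → ‖coeff n φ‖ * r ^ n ≤ B) :
    ‖coeff i (divXSubC φ w)‖ * r ^ (i + 1) ≤ B := by
  rw [divXSubC, coeff_mk, ← le_div_iff₀ (by positivity)]
  refine IsUltrametricDist.norm_tsum_le_of_forall_le_of_nonneg (by positivity) fun j => ?_
  rw [le_div_iff₀ (by positivity)]
  calc ‖coeff (i + 1 + j) φ * w ^ j‖ * r ^ (i + 1)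
      ≤ ‖coeff (i + 1 + j) φ‖ * r ^ j * r ^ (i + 1) := by gcongr; exact norm_mul_pow_le hw j
    _ = ‖coeff (i + 1 + j) φ‖ * r ^ (i + 1 + j) := by ring
    _ ≤ B := h _ (by omega)

lemma isRestricted_divXSubC (hr : 0 < r) (hφ : IsRestricted r φ) (hw : ‖w‖ ≤ r) :
    IsRestricted r (divXSubC φ w) := by
  refine (isRestricted_iff' r _).2 (Metric.tendsto_atTop.2 fun ε hε => ?_)
  obtain ⟨M, hM⟩ := eventually_atTop.1
    (((isRestricted_iff' r φ).1 hφ).eventually (gt_mem_nhds (by positivity : 0 < ε / 2 * r)))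
  refine ⟨M, fun i hi => ?_⟩
  have := norm_coeff_divXSubC_mul_pow_le (i := i) hr hw (by positivity) fun n hn =>
    (hM n (by omega)).le
  rw [pow_succ, ← mul_assoc] at this
  rw [Real.dist_0_eq_abs, abs_of_nonneg (by positivity)]
  exact (le_of_mul_le_mul_right this hr).trans_lt (half_lt_self hε)

variable [CompleteSpace k]

lemma summable_of_norm_le_of_tendsto {f : ℕ → k} {u : ℕ → ℝ} (hf : ∀ n, ‖f n‖ ≤ u n)
    (hu : Tendsto u atTop (𝓝 0)) : Summable f :=
  NonarchimedeanAddGroup.summable_of_tendsto_cofinite_zero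
    (Nat.cofinite_eq_atTop ▸ squeeze_zero_norm hf hu)

lemma summable_coeff_mul_pow (hφ : IsRestricted r φ) (hz : ‖z‖ ≤ r) :
    Summable fun n => coeff n φ * z ^ n :=
  summable_of_norm_le_of_tendsto (fun n => norm_mul_pow_le hz n) ((isRestricted_iff' r φ).1 hφ)

lemma tsumEval_mul (hφ : IsRestricted r φ) (hψ : IsRestricted r ψ) (hz : ‖z‖ ≤ r) :
    tsumEval (φ * ψ) z = tsumEval φ z * tsumEval ψ z := by
  have hφz := summable_coeff_mul_pow hφ hz
  have hψz := summable_coeff_mul_pow hψ hz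
  have : NonarchimedeanRing k := ⟨NonarchimedeanAddGroup.is_nonarchimedean⟩
  have hφψz := hφz.mul_of_nonarchimedean hψz
  rw [tsumEval, tsumEval, tsumEval, hφz.tsum_mul_tsum_eq_tsum_sum_antidiagonal hψz hφψz]
  refine tsum_congr fun n => ?_
  rw [coeff_mul, Finset.sum_mul]
  refine Finset.sum_congr rfl fun p hp => ?_
  rw [← mem_antidiagonal.1 hp, pow_add]
  ring

lemma tsumEval_sub_eval_trunc (hφ : IsRestricted r φ) (hz : ‖z‖ ≤ r) (m : ℕ) :
    tsumEval φ z - (trunc m φ).eval z = ∑' n, coeff (n + m) φ * z ^ (n + m) := by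
  rw [tsumEval, ← (summable_coeff_mul_pow hφ hz).sum_add_tsum_nat_add m, Polynomial.eval,
    eval₂_trunc_eq_sum_range]
  simp

lemma tendstoUniformlyOn_eval_trunc (hφ : IsRestricted r φ) :
    TendstoUniformlyOn (fun m z => (trunc m φ).eval z) (tsumEval φ) atTop
      (Metric.closedBall 0 r) := by
  refine Metric.tendstoUniformlyOn_iff.2 fun ε hε => ?_
  obtain ⟨M, hM⟩ := eventually_atTop.1
    (((isRestricted_iff' r φ).1 hφ).eventually (gt_mem_nhds (half_pos hε)))
  filter_upwards [eventually_ge_atTop M] with m hm z hz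
  rw [mem_closedBall_zero_iff] at hz
  rw [dist_eq_norm, tsumEval_sub_eval_trunc hφ hz]
  refine (IsUltrametricDist.norm_tsum_le_of_forall_le_of_nonneg (half_pos hε).le
    fun n => ?_).trans_lt (half_lt_self hε)
  exact (norm_mul_pow_le hz _).trans (hM _ (by omega)).le

lemma continuousOn_tsumEval (hφ : IsRestricted r φ) :
    ContinuousOn (tsumEval φ) (Metric.closedBall 0 r) :=
  (tendstoUniformlyOn_eval_trunc hφ).continuousOn
    (Frequently.of_forall fun m => (trunc m φ).continuous.continuousOn)

lemma summable_coeff_add_mul_pow (hr : 0 < r) (hφ : IsRestricted r φ) (hw : ‖w‖ ≤ r) (i : ℕ) :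
    Summable fun j => coeff (i + j) φ * w ^ j := by
  refine summable_of_norm_le_of_tendsto (u := fun j => ‖coeff (j + i) φ‖ * r ^ (j + i) / r ^ i)
    (fun j => ?_) (by simpa using
      ((tendsto_add_atTop_iff_nat i).2 ((isRestricted_iff' r φ).1 hφ)).div_const (r ^ i))
  rw [pow_add, mul_div_assoc, mul_div_cancel_right₀ _ (by positivity), add_comm]
  exact norm_mul_pow_le hw j

lemma tsum_coeff_add_mul_pow (hr : 0 < r) (hφ : IsRestricted r φ) (hw : ‖w‖ ≤ r) (i : ℕ) :
    ∑' j, coeff (i + j) φ * w ^ j = coeff i φ + w * ∑' j, coeff (i + 1 + j) φ * w ^ j := by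
  rw [(summable_coeff_add_mul_pow hr hφ hw i).tsum_eq_zero_add, ← tsum_mul_left]
  simp only [add_zero, pow_zero, mul_one, pow_succ, ← add_assoc, add_right_comm i 1]
  congr 1
  exact tsum_congr fun j => by ring

lemma eq_C_add_X_sub_C_mul_divXSubC (hr : 0 < r) (hφ : IsRestricted r φ) (hw : ‖w‖ ≤ r) :
    φ = C (tsumEval φ w) + (X - C w) * divXSubC φ w := by
  ext n
  rcases n with _ | n
  · have h0 := tsum_coeff_add_mul_pow hr hφ hw 0
    simp only [zero_add] at h0
    simp [tsumEval, divXSubC, h0, sub_mul]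
  · simp [divXSubC, sub_mul, coeff_succ_X_mul, tsum_coeff_add_mul_pow hr hφ hw (n + 1)]

variable [IsAlgClosed k] {N : ℕ}

lemma tsumEval_ne_zero_of_isDominantIndex_zero (hr : 0 < r) (hφ : IsRestricted r φ)
    (h : IsDominantIndex r φ 0) {z : k} (hz : ‖z‖ ≤ r) : tsumEval φ z ≠ 0 := by
  have htrunc : ∀ m, ‖(trunc (m + 1) φ).eval z‖ = ‖coeff 0 φ‖ := fun m => by
    have h₀ := h.trunc hr.le m.succ_pos
    rw [h₀.norm_eval hr hz, Multiset.card_eq_zero.1 (h₀.card_filter_roots hr)]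
    simp [coeff_trunc]
  have hlim := ((tendsto_add_atTop_iff_nat 1).2
    ((tendstoUniformlyOn_eval_trunc hφ).tendsto_at (mem_closedBall_zero_iff.2 hz))).norm
  simp only [htrunc] at hlim
  intro h0
  rw [h0, norm_zero] at hlim
  exact h.coeff_ne_zero hr.le (norm_eq_zero.1 (tendsto_nhds_unique tendsto_const_nhds hlim))

theorem exists_tsumEval_eq_zero (hr : 0 < r) (hφ : IsRestricted r φ) (hN : IsDominantIndex r φ N)
    (hN0 : N ≠ 0) : ∃ z, ‖z‖ ≤ r ∧ tsumEval φ z = 0 := by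
  obtain ⟨x, hx⟩ := exists_seq_isRoot_trunc hr hN hN0
  have haN := norm_pos_iff.2 (hN.coeff_ne_zero hr.le)
  have hstep : Tendsto (fun i => x (i + 1) - x i) atTop (𝓝 0) := by
    refine tendsto_zero_iff_norm_tendsto_zero.2 (tendsto_of_tendsto_pow (fun _ => norm_nonneg _) hN0
      (squeeze_zero (fun _ => by positivity) (fun i => (le_div_iff₀ haN).2 (hx i).2.2) ?_))
    have := (tendsto_add_atTop_iff_nat (N + 1)).2 ((isRestricted_iff' r φ).1 hφ)
    simp_rw [add_comm _ (N + 1)] at this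
    simpa using this.div_const ‖coeff N φ‖
  obtain ⟨z, hz⟩ := cauchySeq_tendsto_of_complete
    (NonarchimedeanAddGroup.cauchySeq_of_tendsto_sub_nhds_zero hstep)
  have hxr : ∀ i, x i ∈ Metric.closedBall (0 : k) r := fun i => mem_closedBall_zero_iff.2 (hx i).1
  have hzr := Metric.isClosed_closedBall.mem_of_tendsto hz (Eventually.of_forall hxr)
  have hlim := ((tendstoUniformlyOn_eval_trunc hφ).seq_tendstoUniformlyOn _
    (tendsto_atTop_mono (fun i => Nat.le_add_left i (N + 1)) tendsto_id)).tendsto_comp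
    (continuousOn_tsumEval hφ z hzr) (tendsto_nhdsWithin_iff.2 ⟨hz, Eventually.of_forall hxr⟩)
  refine ⟨z, mem_closedBall_zero_iff.1 hzr, tendsto_nhds_unique hlim ?_⟩
  exact tendsto_const_nhds.congr fun i => ((hx i).2.1.eq_zero).symm

theorem exists_eq_monic_mul (hr : 0 < r) (hφ : IsRestricted r φ)
    (hN : IsDominantIndex r φ N) :
    ∃ (P : k[X]) (ψ : k⟦X⟧), P.Monic ∧ P.natDegree = N ∧ (∀ z, P.IsRoot z → ‖z‖ ≤ r) ∧
      IsRestricted r ψ ∧ (∀ z, ‖z‖ ≤ r → tsumEval ψ z ≠ 0) ∧ φ = P * ψ := by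
  induction N generalizing φ with
  | zero =>
    exact ⟨1, φ, Polynomial.monic_one, Polynomial.natDegree_one, by simp, hφ,
      fun z hz => tsumEval_ne_zero_of_isDominantIndex_zero hr hφ hN hz, by simp⟩
  | succ N ih =>
    obtain ⟨w, hw, hw0⟩ := exists_tsumEval_eq_zero hr hφ hN N.succ_ne_zero
    have hφw : φ = (X - C w) * divXSubC φ w := by
      simpa [hw0] using eq_C_add_X_sub_C_mul_divXSubC hr hφ hw
    have hq := isRestricted_divXSubC hr hφ hw
    obtain ⟨P, ψ, hP, hdeg, hroots, hψ, hψ0, hqψ⟩ :=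
      ih hq (by simpa using (hφw ▸ hN).of_X_sub_C_mul hr hq hw)
    refine ⟨(Polynomial.X - Polynomial.C w) * P, ψ, (Polynomial.monic_X_sub_C w).mul hP, ?_,
      fun z hz => ?_, hψ, hψ0, ?_⟩
    · rw [Polynomial.natDegree_mul (Polynomial.X_sub_C_ne_zero w) hP.ne_zero,
        Polynomial.natDegree_X_sub_C, hdeg, add_comm]
    · rw [Polynomial.IsRoot.def, Polynomial.eval_mul, mul_eq_zero] at hz
      rcases hz with h | h
      · rw [Polynomial.eval_sub, Polynomial.eval_X, Polynomial.eval_C, sub_eq_zero] at h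
        rwa [h]
      · exact hroots z h
    · rw [hφw, hqψ, Polynomial.coe_mul, Polynomial.coe_sub, Polynomial.coe_X, Polynomial.coe_C,
        mul_assoc]

end Series

end NewtonPolygon

open Filter NewtonPolygon

theorem number_of_zeros_general
    (k : Type*) [NontriviallyNormedField k] [IsAlgClosed k] [CompleteSpace k]
    [IsUltrametricDist k]
    (a : ℕ → k) (c : k) (hc : c ≠ 0) (r : ℝ) (hr : r = ‖c‖)
    (hdecay : Tendsto (fun n => ‖a n‖ * r ^ n) atTop (nhds 0))
    (N : ℕ) (hN : ‖a N‖ * r ^ N = ⨆ n : ℕ, ‖a n‖ * r ^ n)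
    (hNmax : ∀ n : ℕ, N < n → ‖a n‖ * r ^ n < ⨆ m : ℕ, ‖a m‖ * r ^ m) :
    {z : k | ‖z‖ ≤ r ∧ ∑' n : ℕ, a n * z ^ n = 0}.Finite ∧
    ∃ (P : Polynomial k) (b : ℕ → k),
      P.Monic ∧ P.natDegree = N ∧ (∀ z : k, P.IsRoot z → ‖z‖ ≤ r) ∧
      Tendsto (fun n => ‖b n‖ * r ^ n) atTop (nhds 0) ∧
      (∀ z : k, ‖z‖ ≤ r → ∑' n : ℕ, b n * z ^ n ≠ 0) ∧
      (∀ z : k, ‖z‖ ≤ r →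
        ∑' n : ℕ, a n * z ^ n = P.eval z * ∑' n : ℕ, b n * z ^ n) := by
  classical
  have hr0 : 0 < r := hr ▸ norm_pos_iff.2 hc
  have hφ : IsRestricted r (mk a) := (isRestricted_iff' r _).2 (by simpa using hdecay)
  have hdom : IsDominantIndex r (mk a) N := by
    refine ⟨fun n => ?_, fun n hn => ?_⟩ <;> simp only [coeff_mk, hN]
    exacts [le_ciSup hdecay.bddAbove_range n, hNmax n hn]
  obtain ⟨P, ψ, hP, hdeg, hroots, hψ, hψ0, hφψ⟩ := exists_eq_monic_mul hr0 hφ hdom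
  have heval : ∀ z, ‖z‖ ≤ r → ∑' n, a n * z ^ n = P.eval z * ∑' n, coeff n ψ * z ^ n :=
    fun z hz => by
      have := tsumEval_mul (isRestricted_coe P) hψ hz
      rw [← hφψ, tsumEval_coe] at this
      simpa [tsumEval] using this
  refine ⟨P.roots.toFinset.finite_toSet.subset fun z ⟨hz, hz0⟩ => ?_, P, fun n => coeff n ψ, hP,
    hdeg, hroots, (isRestricted_iff' r ψ).1 hψ, hψ0, heval⟩
  rw [heval z hz] at hz0
  simpa [hP.ne_zero] using (mul_eq_zero.1 hz0).resolve_right (hψ0 z hz)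

/-- Newton polygon zero counting: for a power series convergent on the closed disc of
radius `r ∈ |k*|`, not identically zero, the number of zeros in the disc counted with
multiplicity is finite and equals the largest index `N` with `‖a_N‖ r^N = sup_n ‖aₙ‖ rⁿ`.
This is expressed by factoring `f = P · u` with `P` a monic polynomial of degree `N`
all of whose roots lie in the disc and `u` a convergent power series with no zeros
in the disc. -/
theorem number_of_zeros
    (k : Type*) [NontriviallyNormedField k] [IsAlgClosed k] [CompleteSpace k]
    [IsUltrametricDist k]
    (a : ℕ → k) (c : k) (hc : c ≠ 0) (r : ℝ) (hr : r = ‖c‖)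
    (hdecay : Tendsto (fun n => ‖a n‖ * r ^ n) atTop (nhds 0))
    (hne : ∃ n, a n ≠ 0)
    (N : ℕ) (hN : ‖a N‖ * r ^ N = ⨆ n : ℕ, ‖a n‖ * r ^ n)
    (hNmax : ∀ n : ℕ, N < n → ‖a n‖ * r ^ n < ⨆ m : ℕ, ‖a m‖ * r ^ m) :
    {z : k | ‖z‖ ≤ r ∧ ∑' n : ℕ, a n * z ^ n = 0}.Finite ∧
    ∃ (P : Polynomial k) (b : ℕ → k),
      P.Monic ∧ P.natDegree = N ∧ (∀ z : k, P.IsRoot z → ‖z‖ ≤ r) ∧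
      Tendsto (fun n => ‖b n‖ * r ^ n) atTop (nhds 0) ∧
      (∀ z : k, ‖z‖ ≤ r → ∑' n : ℕ, b n * z ^ n ≠ 0) ∧
      (∀ z : k, ‖z‖ ≤ r →
        ∑' n : ℕ, a n * z ^ n = P.eval z * ∑' n : ℕ, b n * z ^ n) :=
  number_of_zeros_general k a c hc r hr hdecay N hN hNmax
end
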